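/- arXiv:math/0209022 — 4 statements merged into one kernel-verified Lean document; each statement's English description precedes it below -/
import Mathlib

section
/- A permutation π of length n belongs to the class Ω_k (permutations avoiding all k! patterns of the form (k+1)a₁…a_k where a₁…a_k is a permutation of 1..k) if and only if for every index i, the rank of π_i among {π_i, π_{i+1}, …, π_n} is at most k. -/
/-- Pattern involvement: `π ⪯ σ` iff `σ` has a subsequence order-isomorphic to `π`. -/
def Involves {m n : ℕ} (π : Equiv.Perm (Fin m)) (σ : Equiv.Perm (Fin n)) : Prop :=
  ∃ e : Fin m ↪o Fin n, ∀ a b : Fin m, π a < π b ↔ σ (e a) < σ (e b)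

/-- Rank encoding: `rankEnc π i = |{j ≥ i : π j ≤ π i}|`. -/
def rankEnc {n : ℕ} (π : Equiv.Perm (Fin n)) (i : Fin n) : ℕ :=
  (Finset.univ.filter fun j : Fin n => i ≤ j ∧ π j ≤ π i).card

/-- `π ∈ Ω_k` (avoiding all patterns `(k+1)a₁…a_k`, i.e. all
permutations of length `k+1` whose first entry is the maximum) iff every rank
in the rank encoding is at most `k`. -/
theorem stmt0 {n k : ℕ} (π : Equiv.Perm (Fin n)) :
    (∀ τ : Equiv.Perm (Fin (k + 1)), τ 0 = Fin.last k → ¬ Involves τ π) ↔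
      ∀ i : Fin n, rankEnc π i ≤ k := by
  constructor
  · intro h i
    by_contra hlt
    push_neg at hlt
    set S := Finset.univ.filter (fun j : Fin n => i ≤ j ∧ π j ≤ π i) with hSdef
    have hiS : i ∈ S := by simp [hSdef]
    have hScard : k + 1 ≤ S.card := hlt
    -- choose T ⊆ S with i ∈ T and |T| = k+1
    have hk : k ≤ (S.erase i).card := by
      rw [Finset.card_erase_of_mem hiS]; omega
    obtain ⟨T', hT'sub, hT'card⟩ := Finset.exists_subset_card_eq hk
    have hiT' : i ∉ T' := fun hm => (Finset.notMem_erase i S) (hT'sub hm)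
    set T := insert i T' with hTdef
    have hTsub : T ⊆ S := by
      intro x hx
      rcases Finset.mem_insert.mp hx with rfl | hx
      · exact hiS
      · exact (Finset.erase_subset i S) (hT'sub hx)
    have hTcard : T.card = k + 1 := by
      rw [hTdef, Finset.card_insert_of_notMem hiT', hT'card]
    have hiT : i ∈ T := Finset.mem_insert_self i T'
    set e : Fin (k + 1) ↪o Fin n := T.orderEmbOfFin hTcard with hedef
    have heMem : ∀ a, e a ∈ T := fun a => T.orderEmbOfFin_mem hTcard a
    have heS : ∀ a, e a ∈ S := fun a => hTsub (heMem a)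
    have hele : ∀ a, i ≤ e a ∧ π (e a) ≤ π i := by
      intro a
      have := heS a
      rw [hSdef, Finset.mem_filter] at this
      exact this.2
    have he0 : e 0 = i := by
      have hmin : e 0 = T.min' ⟨i, hiT⟩ := Finset.orderEmbOfFin_zero hTcard (Nat.succ_pos k)
      have h1 : i ≤ e 0 := (hele 0).1
      have h2 : e 0 ≤ i := hmin ▸ Finset.min'_le T i hiT
      exact le_antisymm h2 h1
    -- build the pattern τ
    set g : Fin (k + 1) → Fin n := fun a => π (e a) with hgdef
    have hginj : Function.Injective g := fun a b hab =>
      e.injective (π.injective hab)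
    set G : Finset (Fin n) := Finset.univ.image g with hGdef
    have hGcard : G.card = k + 1 := by
      rw [hGdef, Finset.card_image_of_injective _ hginj, Finset.card_univ, Fintype.card_fin]
    have hgG : ∀ a, g a ∈ G := fun a => Finset.mem_image_of_mem g (Finset.mem_univ a)
    set φ := G.orderIsoOfFin hGcard with hφdef
    set f : Fin (k + 1) → Fin (k + 1) := fun a => φ.symm ⟨g a, hgG a⟩ with hfdef
    have hfinj : Function.Injective f := by
      intro a b hab
      apply hginj
      have := φ.symm.injective hab
      exact congrArg Subtype.val this
    have hfbij : Function.Bijective f := (Finite.injective_iff_bijective).mp hfinj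
    set τ : Equiv.Perm (Fin (k + 1)) := Equiv.ofBijective f hfbij with hτdef
    have hτ_lt : ∀ a b, τ a < τ b ↔ g a < g b := by
      intro a b
      show φ.symm ⟨g a, hgG a⟩ < φ.symm ⟨g b, hgG b⟩ ↔ g a < g b
      exact φ.symm.lt_iff_lt.trans Subtype.mk_lt_mk
    have hτle : ∀ a, τ a ≤ τ 0 := by
      intro a
      rcases eq_or_ne a 0 with rfl | hne
      · exact le_refl _
      · have : g a < g 0 := by
          have h1 : π (e a) ≤ π i := (hele a).2
          have h2 : g 0 = π i := by rw [hgdef]; simp [he0]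
          have h3 : g a ≠ g 0 := fun hg => hne (hginj hg)
          rw [h2]; exact lt_of_le_of_ne h1 (h2 ▸ h3)
        exact le_of_lt ((hτ_lt a 0).mpr this)
    have hτ0 : τ 0 = Fin.last k := by
      obtain ⟨c, hc⟩ := τ.surjective (Fin.last k)
      exact le_antisymm (Fin.le_last _) (hc ▸ hτle c)
    exact h τ hτ0 ⟨e, fun a b => hτ_lt a b⟩
  · rintro h τ hτ0 ⟨e, he⟩
    set i := e 0 with hidef
    have hmem : ∀ a : Fin (k + 1), e a ∈
        Finset.univ.filter (fun j : Fin n => i ≤ j ∧ π j ≤ π i) := by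
      intro a
      refine Finset.mem_filter.mpr ⟨Finset.mem_univ _, e.monotone (Fin.zero_le a), ?_⟩
      rcases eq_or_ne a 0 with rfl | hne
      · exact le_refl _
      · have hτa : τ a < τ 0 := by
          rw [hτ0]
          exact lt_of_le_of_ne (Fin.le_last _)
            (fun hc => hne (τ.injective (hc.trans hτ0.symm)))
        exact le_of_lt ((he a 0).mp hτa)
    have hcard : k + 1 ≤ rankEnc π i := by
      have := Finset.card_le_card_of_injOn (s := (Finset.univ : Finset (Fin (k+1)))) (fun a => e a)
        (fun a _ => hmem a) (fun a _ b _ hab => e.injective hab)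
      simpa [rankEnc] using this
    have := h i
    omega
end

section
/- The set E(Ω_k) of rank encodings of permutations in Ω_k equals [k]* \ [k]*F, where F is the finite set of words w of length m ≤ k−1 over alphabet [k] for which the condition w_{m+1-i} ≤ i fails for some i. Consequently E(Ω_k) is a regular language. -/
/-- Words over the alphabet `[k] = {1,…,k}`. -/
def OverAlph (k : ℕ) (w : List ℕ) : Prop := ∀ a ∈ w, 1 ≤ a ∧ a ≤ k

/-- Condition (5): `p_{n+1-i} ≤ i` for all `i`, 0-indexed: `w_j ≤ |w| - j`. -/
def CondEnc (w : List ℕ) : Prop := ∀ j : Fin w.length, w.get j ≤ w.length - (j : ℕ)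

/-- The finite set `F`: words over `[k]` of length at most `k-1` violating condition (5). -/
def FSet (k : ℕ) : Set (List ℕ) :=
  {f | OverAlph k f ∧ f.length ≤ k - 1 ∧ ¬ CondEnc f}

/-- The language of rank encodings of permutations in `Ω_k`. -/
def EOmega (k : ℕ) : Language ℕ :=
  {w | ∃ (n : ℕ) (π : Equiv.Perm (Fin n)),
    (∀ i, rankEnc π i ≤ k) ∧ w = List.ofFn (rankEnc π)}



lemma rankEnc_pos {n : ℕ} (π : Equiv.Perm (Fin n)) (i : Fin n) : 1 ≤ rankEnc π i := by
  have hm : i ∈ Finset.univ.filter fun j : Fin n => i ≤ j ∧ π j ≤ π i := by simp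
  have := Finset.card_pos.mpr ⟨i, hm⟩
  simpa [rankEnc] using this

lemma rankEnc_le {n : ℕ} (π : Equiv.Perm (Fin n)) (i : Fin n) : rankEnc π i ≤ n - i := by
  have hs : (Finset.univ.filter fun j : Fin n => i ≤ j ∧ π j ≤ π i) ⊆ Finset.Ici i := by
    intro j hj
    simp only [Finset.mem_filter] at hj
    exact Finset.mem_Ici.mpr hj.2.1
  simpa [rankEnc, Fin.card_Ici] using Finset.card_le_card hs

lemma exists_perm (w : List ℕ)
    (h : ∀ j (hj : j < w.length), 1 ≤ w[j] ∧ w[j] ≤ w.length - j) :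
    ∃ π : Equiv.Perm (Fin w.length), List.ofFn (rankEnc π) = w := by
  induction w with
  | nil => exact ⟨1, by simp⟩
  | cons a t ih =>
    obtain ⟨τ, hτ⟩ := ih (fun j hj => by
      have := h (j+1) (by simpa using Nat.succ_lt_succ hj)
      simpa using this)
    have ha := h 0 (Nat.succ_pos _)
    simp only [List.getElem_cons_zero, List.length_cons, Nat.sub_zero] at ha
    have ha1 : 1 ≤ a := ha.1
    have ha2 : a ≤ t.length + 1 := ha.2
    set a' : Fin (t.length+1) := ⟨a - 1, by omega⟩ with ha'
    set π : Equiv.Perm (Fin (t.length+1)) :=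
      (finSuccEquiv t.length).trans ((Equiv.optionCongr τ).trans (finSuccEquiv' a').symm) with hπ
    have hπ0 : π 0 = a' := by
      simp [hπ, finSuccEquiv_zero, finSuccEquiv'_symm_none]
    have hπs : ∀ i : Fin t.length, π i.succ = a'.succAbove (τ i) := by
      intro i
      simp [hπ, finSuccEquiv_succ, finSuccEquiv'_symm_some]
    have head : rankEnc π 0 = a := by
      have h1 : (Finset.univ.filter fun j : Fin (t.length+1) => (0:Fin (t.length+1)) ≤ j ∧ π j ≤ π 0)
          = Finset.univ.filter fun j : Fin (t.length+1) => π j ≤ a' := by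
        ext j; simp [hπ0, Fin.zero_le]
      have h2 : (Finset.univ.filter fun j : Fin (t.length+1) => π j ≤ a').card
          = (Finset.Iic a').card := by
        apply Finset.card_bij (fun j _ => π j)
        · intro j hj; simp only [Finset.mem_filter] at hj; exact Finset.mem_Iic.mpr hj.2
        · intro x _ y _ hxy; exact π.injective hxy
        · intro y hy; exact ⟨π.symm y, by simpa using Finset.mem_Iic.mp hy, by simp⟩
      rw [rankEnc, h1, h2, Fin.card_Iic]
      simp only [ha']
      omega
    have tail : ∀ i : Fin t.length, rankEnc π i.succ = rankEnc τ i := by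
      intro i
      rw [rankEnc, rankEnc]
      symm
      apply Finset.card_bij (fun m _ => m.succ)
      · intro m hm
        simp only [Finset.mem_filter, Finset.mem_univ, true_and] at hm ⊢
        rw [hπs, hπs, Fin.succAbove_le_succAbove_iff, Fin.succ_le_succ_iff]
        exact hm
      · intro x _ y _ hxy; exact Fin.succ_injective _ hxy
      · intro j hj
        simp only [Finset.mem_filter, Finset.mem_univ, true_and] at hj
        have hj0 : j ≠ 0 := by
          intro h0
          rw [h0] at hj
          exact absurd hj.1 (by simp [Fin.le_def])
        obtain ⟨m, rfl⟩ := Fin.eq_succ_of_ne_zero hj0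
        refine ⟨m, ?_, rfl⟩
        simp only [Finset.mem_filter, Finset.mem_univ, true_and]
        rw [hπs, hπs, Fin.succAbove_le_succAbove_iff, Fin.succ_le_succ_iff] at hj
        exact hj
    have htail : List.ofFn (fun i : Fin t.length => rankEnc π i.succ) = t := by
      rw [show (fun i : Fin t.length => rankEnc π i.succ) = rankEnc τ from funext tail]
      exact hτ
    exact ⟨π, by rw [List.ofFn_succ, head, htail]⟩





lemma condEnc_iff (w : List ℕ) :
    CondEnc w ↔ ∀ j (hj : j < w.length), w[j] ≤ w.length - j := by
  constructor
  · intro hc j hj; exact hc ⟨j, hj⟩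
  · intro hc j; exact hc j.1 j.2

lemma EOmega_eq (k : ℕ) : EOmega k = {w | OverAlph k w ∧ CondEnc w} := by
  ext w
  constructor
  · rintro ⟨n, π, hk, rfl⟩
    constructor
    · intro x hx
      rw [List.mem_ofFn] at hx
      obtain ⟨i, rfl⟩ := hx
      exact ⟨rankEnc_pos π i, hk i⟩
    · rw [condEnc_iff]
      intro j hj
      simp only [List.length_ofFn] at hj ⊢
      rw [List.getElem_ofFn]
      exact rankEnc_le π ⟨j, hj⟩
  · rintro ⟨h1, h2⟩
    rw [condEnc_iff] at h2
    obtain ⟨π, hπ⟩ := exists_perm w (fun j hj =>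
      ⟨(h1 w[j] (List.getElem_mem hj)).1, h2 j hj⟩)
    refine ⟨w.length, π, ?_, hπ.symm⟩
    intro i
    have hmem : rankEnc π i ∈ List.ofFn (rankEnc π) := by
      rw [List.mem_ofFn]; exact ⟨i, rfl⟩
    rw [hπ] at hmem
    exact (h1 _ hmem).2

def Sfun (w : List ℕ) : ℕ := w.foldl (fun s a => max (s - 1) (a - 1)) 0

lemma Sfun_concat (w : List ℕ) (a : ℕ) :
    Sfun (w ++ [a]) = max (Sfun w - 1) (a - 1) := by
  simp [Sfun, List.foldl_append]

lemma Sfun_le_iff (w : List ℕ) : ∀ m : ℕ,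
    (Sfun w ≤ m ↔ ∀ j (hj : j < w.length), w[j] ≤ w.length - j + m) := by
  induction w using List.reverseRecOn with
  | nil => intro m; simp [Sfun]
  | append_singleton ws a ih =>
    intro m
    rw [Sfun_concat]
    have hlen : (ws ++ [a]).length = ws.length + 1 := by simp
    constructor
    · intro hle j hj
      rw [hlen] at hj
      have h1 : Sfun ws ≤ m + 1 := by omega
      have h2 : a ≤ m + 1 := by omega
      rcases Nat.lt_or_ge j ws.length with hj' | hj'
      · rw [List.getElem_append_left hj']
        have := (ih (m+1)).mp h1 j hj'
        rw [hlen]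
        omega
      · have hj'' : j = ws.length := by omega
        subst hj''
        have hga : (ws ++ [a])[ws.length]'(by simp) = a := by simp
        rw [hga, hlen]
        omega
    · intro hall
      have h1 : Sfun ws ≤ m + 1 := by
        rw [ih (m+1)]
        intro j hj
        have := hall j (by omega)
        rw [List.getElem_append_left hj] at this
        rw [hlen] at this
        omega
      have h2 : a ≤ m + 1 := by
        have hthis := hall ws.length (by omega)
        have hga : (ws ++ [a])[ws.length]'(by simp) = a := by simp
        rw [hga, hlen] at hthis
        omega
      omega

lemma condEnc_iff_Sfun (w : List ℕ) : CondEnc w ↔ Sfun w = 0 := by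
  rw [condEnc_iff, ← Nat.le_zero, Sfun_le_iff]
  simp

lemma Sfun_le_k {k : ℕ} {w : List ℕ} (h : OverAlph k w) : Sfun w ≤ k := by
  rw [Sfun_le_iff]
  intro j hj
  have := (h w[j] (List.getElem_mem hj)).2
  omega

def Mk (k : ℕ) : DFA ℕ (Fin (k+2)) where
  step := fun s a =>
    if h : s.val ≤ k ∧ 1 ≤ a ∧ a ≤ k then ⟨max (s.val - 1) (a - 1), by omega⟩
    else Fin.last (k+1)
  start := ⟨0, by omega⟩
  accept := {⟨0, by omega⟩}

open Classical in
lemma Mk_step_val (k : ℕ) (s : Fin (k+2)) (a : ℕ) :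
    ((Mk k).step s a).val =
      if s.val ≤ k ∧ 1 ≤ a ∧ a ≤ k then max (s.val - 1) (a - 1) else k + 1 := by
  by_cases h : s.val ≤ k ∧ 1 ≤ a ∧ a ≤ k <;> simp [Mk, h, Fin.last]

open Classical in
lemma Mk_eval (k : ℕ) (w : List ℕ) :
    ((Mk k).evalFrom (Mk k).start w).val = if OverAlph k w then Sfun w else k + 1 := by
  induction w using List.reverseRecOn with
  | nil => simp [Mk, DFA.evalFrom, OverAlph, Sfun]
  | append_singleton ws a ih =>
    have hover : OverAlph k (ws ++ [a]) ↔ OverAlph k ws ∧ (1 ≤ a ∧ a ≤ k) := by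
      constructor
      · intro h
        exact ⟨fun x hx => h x (List.mem_append_left _ hx),
          h a (List.mem_append_right _ (List.mem_singleton_self a))⟩
      · rintro ⟨hh1, hh2⟩ x hx
        rcases List.mem_append.mp hx with hx | hx
        · exact hh1 x hx
        · rw [List.mem_singleton.mp hx]; exact hh2
    rw [DFA.evalFrom_append_singleton, Mk_step_val]
    by_cases h1 : OverAlph k ws
    · rw [if_pos h1] at ih
      rw [ih]
      by_cases h2 : 1 ≤ a ∧ a ≤ k
      · rw [if_pos ⟨Sfun_le_k h1, h2⟩, if_pos (hover.mpr ⟨h1, h2⟩), Sfun_concat]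
      · rw [if_neg (fun hc => h2 hc.2), if_neg (fun hc => h2 (hover.mp hc).2)]
    · rw [if_neg h1] at ih
      rw [ih, if_neg (fun hc => by omega), if_neg (fun hc => h1 (hover.mp hc).1)]

lemma Mk_accepts (k : ℕ) : (Mk k).accepts = EOmega k := by
  ext w
  rw [EOmega_eq]
  have : w ∈ (Mk k).accepts ↔ (Mk k).evalFrom (Mk k).start w ∈ (Mk k).accept :=
    Iff.rfl
  rw [this]
  have hacc : (Mk k).evalFrom (Mk k).start w ∈ (Mk k).accept ↔
      ((Mk k).evalFrom (Mk k).start w).val = 0 := by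
    rw [show (Mk k).accept = {(⟨0, by omega⟩ : Fin (k+2))} from rfl,
      Set.mem_singleton_iff, Fin.ext_iff]
  rw [hacc, Mk_eval]
  by_cases h : OverAlph k w
  · rw [if_pos h]
    exact ⟨fun h0 => ⟨h, (condEnc_iff_Sfun w).mpr h0⟩,
      fun hc => (condEnc_iff_Sfun w).mp hc.2⟩
  · rw [if_neg h]
    exact ⟨fun h0 => absurd h0 (by omega), fun hc => absurd hc.1 h⟩

lemma EOmega_regular (k : ℕ) : Language.IsRegular (EOmega k) :=
  ⟨Fin (k+2), inferInstance, Mk k, Mk_accepts k⟩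


/-- `E(Ω_k) = [k]* \ [k]*F`, and consequently `E(Ω_k)` is regular. -/
theorem stmt3 (k : ℕ) :
    EOmega k = {w | OverAlph k w} \
        {w | ∃ u f, OverAlph k u ∧ f ∈ FSet k ∧ w = u ++ f} ∧
      Language.IsRegular (EOmega k) := by
  refine ⟨?_, EOmega_regular k⟩
  rw [EOmega_eq]
  ext w
  constructor
  · rintro ⟨h1, h2⟩
    refine ⟨h1, ?_⟩
    rintro ⟨u, f, hu, ⟨hf1, hf2, hf3⟩, rfl⟩
    apply hf3
    rw [condEnc_iff] at h2 ⊢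
    intro j hj
    have hj' : u.length + j < (u ++ f).length := by simp; omega
    have h3 := h2 (u.length + j) hj'
    rw [List.getElem_append_right (by omega)] at h3
    simp only [List.length_append] at h3
    have hidx : u.length + j - u.length = j := by omega
    simp only [hidx] at h3
    exact h3.trans (by omega)
  · rintro ⟨h1, h2⟩
    refine ⟨h1, ?_⟩
    rw [condEnc_iff]
    by_contra hc
    push_neg at hc
    obtain ⟨j, hj, hbad⟩ := hc
    apply h2
    have hk : w[j] ≤ k := (h1 _ (List.getElem_mem hj)).2
    refine ⟨w.take j, w.drop j, fun x hx => h1 x (List.mem_of_mem_take hx),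
      ⟨fun x hx => h1 x (List.mem_of_mem_drop hx), ?_, ?_⟩,
      (List.take_append_drop j w).symm⟩
    · simp only [List.length_drop]
      omega
    · rw [condEnc_iff]
      push_neg
      refine ⟨0, by simp only [List.length_drop]; omega, ?_⟩
      have hg : (w.drop j)[0]'(by simp only [List.length_drop]; omega) = w[j] := by
        simp
      rw [hg]
      simp only [List.length_drop]
      omega
end

section
/- For each k, there is a finite transducer defining the deletion relation D = {(p, p′) : p, p′ ∈ E(Ω_k) and p′ = ∂_i p for some i}, where ∂_i p is the rank encoding of the permutation obtained by deleting the i-th entry of the permutation encoded by p. -/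
/-- A (nondeterministic) finite transducer with input alphabet `Δ`, output
alphabet `Γ` and state set `S`; transitions are labelled by an optional input
letter and an optional output letter (`none` playing the role of `ε`). -/
structure Transducer (Δ Γ S : Type) where
  start : S
  accept : Set S
  step : S → Option Δ → Option Γ → Set S

/-- `M.Path s α β t`: the transducer can go from state `s` to state `t` along a
path whose input labels concatenate to `α` and output labels to `β`. -/
inductive Transducer.Path {Δ Γ S : Type} (M : Transducer Δ Γ S) :
    S → List Δ → List Γ → S → Prop
  | nil (s : S) : Transducer.Path M s [] [] s
  | cons {s t u : S} {d : Option Δ} {g : Option Γ} {α : List Δ} {β : List Γ} :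
      t ∈ M.step s d g → Transducer.Path M t α β u →
      Transducer.Path M s (d.toList ++ α) (g.toList ++ β) u

/-- The relation between input and output words defined by the transducer. -/
def Transducer.Rel {Δ Γ S : Type} (M : Transducer Δ Γ S) (α : List Δ) (β : List Γ) : Prop :=
  ∃ s ∈ M.accept, M.Path M.start α β s

/-- `IsDeletion π i π'` : `π'` is the permutation obtained from `π` by deleting the
entry in position `i` and relabelling order-isomorphically; `e` enumerates the
remaining positions in order. -/
def IsDeletion {n : ℕ} (π : Equiv.Perm (Fin (n + 1))) (i : Fin (n + 1))
    (π' : Equiv.Perm (Fin n)) : Prop :=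
  ∃ e : Fin n ↪o Fin (n + 1), (∀ j, e j ≠ i) ∧
    ∀ a b : Fin n, π' a < π' b ↔ π (e a) < π (e b)

/-- The single-deletion relation on rank encodings of permutations of `Ω_k`:
`DelRel k p p'` iff `p` encodes some `π ∈ Ω_k` and `p' = ∂_i p` encodes the
permutation obtained from `π` by deleting its `i`-th entry. -/
def DelRel (k : ℕ) (p p' : List ℕ) : Prop :=
  ∃ (n : ℕ) (π : Equiv.Perm (Fin (n + 1))) (i : Fin (n + 1)) (π' : Equiv.Perm (Fin n)),
    (∀ j, rankEnc π j ≤ k) ∧ IsDeletion π i π' ∧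
    p = List.ofFn (rankEnc π) ∧ p' = List.ofFn (rankEnc π')

namespace Stmt13Aux

open Equiv Finset
open Equiv Finset

/-- The pattern (relative order) permutation of an injective map `Fin n → Fin N`. -/
noncomputable def patternPerm {n N : ℕ} (f : Fin n → Fin N) (hf : Function.Injective f) :
    Equiv.Perm (Fin n) := by
  have hcard : (Finset.univ.image f).card = n := by
    rw [Finset.card_image_of_injective _ hf, Finset.card_univ, Fintype.card_fin]
  have hmem : ∀ j, f j ∈ Finset.univ.image f := fun j => Finset.mem_image_of_mem f (Finset.mem_univ j)
  refine Equiv.ofBijective (fun j => ((Finset.univ.image f).orderIsoOfFin hcard).symm ⟨f j, hmem j⟩) ?_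
  rw [← Finite.injective_iff_bijective]
  intro a b hab
  apply hf
  have := congrArg ((Finset.univ.image f).orderIsoOfFin hcard) hab
  simp only [OrderIso.apply_symm_apply] at this
  exact congrArg Subtype.val this

lemma patternPerm_lt {n N : ℕ} (f : Fin n → Fin N) (hf : Function.Injective f) (a b : Fin n) :
    patternPerm f hf a < patternPerm f hf b ↔ f a < f b := by
  have hcard : (Finset.univ.image f).card = n := by
    rw [Finset.card_image_of_injective _ hf, Finset.card_univ, Fintype.card_fin]
  show ((Finset.univ.image f).orderIsoOfFin hcard).symm _ < ((Finset.univ.image f).orderIsoOfFin hcard).symm _ ↔ _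
  rw [OrderIso.lt_iff_lt]
  rfl

lemma patternPerm_le {n N : ℕ} (f : Fin n → Fin N) (hf : Function.Injective f) (a b : Fin n) :
    patternPerm f hf a ≤ patternPerm f hf b ↔ f a ≤ f b := by
  rw [← not_lt, ← not_lt, patternPerm_lt]

/-- Prepend to a permutation: position `0` gets the value `w`. -/
noncomputable def consPerm {n : ℕ} (w : Fin (n + 1)) (σ : Equiv.Perm (Fin n)) :
    Equiv.Perm (Fin (n + 1)) := by
  refine Equiv.ofBijective (fun j => Fin.cases w (fun a => w.succAbove (σ a)) j) ?_
  rw [← Finite.injective_iff_bijective]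
  intro a b hab
  induction a using Fin.cases with
  | zero =>
    induction b using Fin.cases with
    | zero => rfl
    | succ b =>
      simp only [Fin.cases_zero, Fin.cases_succ] at hab
      exact absurd hab.symm (Fin.succAbove_ne w (σ b))
  | succ a =>
    induction b using Fin.cases with
    | zero =>
      simp only [Fin.cases_zero, Fin.cases_succ] at hab
      exact absurd hab (Fin.succAbove_ne w (σ a))
    | succ b =>
      simp only [Fin.cases_succ] at hab
      have := σ.injective (Fin.succAbove_right_injective hab)
      rw [this]

@[simp] lemma consPerm_zero {n : ℕ} (w : Fin (n + 1)) (σ : Equiv.Perm (Fin n)) :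
    consPerm w σ 0 = w := rfl

@[simp] lemma consPerm_succ {n : ℕ} (w : Fin (n + 1)) (σ : Equiv.Perm (Fin n)) (a : Fin n) :
    consPerm w σ a.succ = w.succAbove (σ a) := rfl

lemma consPerm_surjective {n : ℕ} (π : Equiv.Perm (Fin (n + 1))) :
    ∃ (w : Fin (n + 1)) (σ : Equiv.Perm (Fin n)), π = consPerm w σ := by
  classical
  have hinj : Function.Injective
      (fun p : Fin (n + 1) × Equiv.Perm (Fin n) => consPerm p.1 p.2) := by
    rintro ⟨w, σ⟩ ⟨w', σ'⟩ h
    have h0 : w = w' := by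
      have := congrFun (congrArg (fun e : Equiv.Perm (Fin (n+1)) => (e : Fin (n+1) → Fin (n+1))) h) 0
      simpa using this
    subst h0
    have hσ : σ = σ' := by
      ext a
      have := congrFun (congrArg (fun e : Equiv.Perm (Fin (n+1)) => (e : Fin (n+1) → Fin (n+1))) h) a.succ
      simp only [consPerm_succ] at this
      exact congrArg Fin.val (Fin.succAbove_right_injective this)
    rw [hσ]
  have hbij : Function.Bijective
      (fun p : Fin (n + 1) × Equiv.Perm (Fin n) => consPerm p.1 p.2) := by
    rw [Fintype.bijective_iff_injective_and_card]
    refine ⟨hinj, ?_⟩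
    rw [Fintype.card_prod, Fintype.card_perm, Fintype.card_perm, Fintype.card_fin,
      Fintype.card_fin, Nat.factorial_succ]
  obtain ⟨⟨w, σ⟩, hw⟩ := hbij.surjective π
  exact ⟨w, σ, hw.symm⟩

lemma rank_cons_zero {n : ℕ} (w : Fin (n + 1)) (σ : Equiv.Perm (Fin n)) :
    rankEnc (consPerm w σ) 0 = (w : ℕ) + 1 := by
  unfold rankEnc
  have : (Finset.univ.filter fun j : Fin (n+1) => (0 : Fin (n+1)) ≤ j ∧ consPerm w σ j ≤ consPerm w σ 0).card
      = (Finset.Iic w).card := by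
    apply Finset.card_bij (fun j _ => consPerm w σ j)
    · intro a ha
      rw [Finset.mem_filter] at ha
      exact Finset.mem_Iic.2 ha.2.2
    · intro a _ b _ h
      exact (consPerm w σ).injective h
    · intro b hb
      refine ⟨(consPerm w σ).symm b, ?_, by simp⟩
      rw [Finset.mem_filter]
      exact ⟨Finset.mem_univ _, Fin.zero_le _, by simpa using Finset.mem_Iic.1 hb⟩
  rw [this, Fin.card_Iic]

lemma rank_cons_succ {n : ℕ} (w : Fin (n + 1)) (σ : Equiv.Perm (Fin n)) (a : Fin n) :
    rankEnc (consPerm w σ) a.succ = rankEnc σ a := by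
  unfold rankEnc
  symm
  apply Finset.card_bij (fun b _ => b.succ)
  · intro b hb
    simp only [Finset.mem_filter, Finset.mem_univ, true_and] at hb ⊢
    refine ⟨Fin.succ_le_succ_iff.2 hb.1, ?_⟩
    simp only [consPerm_succ]
    exact (Fin.strictMono_succAbove w).le_iff_le.2 hb.2
  · intro a₁ _ a₂ _ h
    exact Fin.succ_injective _ h
  · intro j hj
    simp only [Finset.mem_filter, Finset.mem_univ, true_and] at hj
    have hj0 : j ≠ 0 := by
      intro h
      rw [h] at hj
      exact absurd hj.1 (by simp [Fin.le_def])
    obtain ⟨b, rfl⟩ := Fin.eq_succ_of_ne_zero hj0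
    refine ⟨b, ?_, rfl⟩
    simp only [Finset.mem_filter, Finset.mem_univ, true_and]
    refine ⟨Fin.succ_le_succ_iff.1 hj.1, ?_⟩
    have := hj.2
    simp only [consPerm_succ] at this
    exact (Fin.strictMono_succAbove w).le_iff_le.1 this

open Equiv Finset

/-- Deletion of the `i`-th entry of `π`. -/
noncomputable def delPerm {n : ℕ} (π : Equiv.Perm (Fin (n + 1))) (i : Fin (n + 1)) :
    Equiv.Perm (Fin n) :=
  patternPerm (fun a => π (i.succAbove a))
    (π.injective.comp Fin.succAbove_right_injective)

lemma delPerm_lt {n : ℕ} (π : Equiv.Perm (Fin (n + 1))) (i : Fin (n + 1)) (a b : Fin n) :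
    delPerm π i a < delPerm π i b ↔ π (i.succAbove a) < π (i.succAbove b) :=
  patternPerm_lt _ _ a b

lemma delPerm_le {n : ℕ} (π : Equiv.Perm (Fin (n + 1))) (i : Fin (n + 1)) (a b : Fin n) :
    delPerm π i a ≤ delPerm π i b ↔ π (i.succAbove a) ≤ π (i.succAbove b) :=
  patternPerm_le _ _ a b

/-- Core lemma: effect of deletion on the rank encoding. -/
lemma rank_del {n : ℕ} (π : Equiv.Perm (Fin (n + 1))) (i : Fin (n + 1)) (a : Fin n) :
    rankEnc (delPerm π i) a
      + (if i.succAbove a < i ∧ π i < π (i.succAbove a) then 1 else 0)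
      = rankEnc π (i.succAbove a) := by
  classical
  set T : Finset (Fin (n+1)) :=
    Finset.univ.filter (fun j => i.succAbove a ≤ j ∧ π j ≤ π (i.succAbove a)) with hT
  have h1 : rankEnc (delPerm π i) a = (T.erase i).card := by
    unfold rankEnc
    apply Finset.card_bij (fun b _ => i.succAbove b)
    · intro b hb
      simp only [Finset.mem_filter, Finset.mem_univ, true_and] at hb
      rw [Finset.mem_erase]
      refine ⟨Fin.succAbove_ne i b, ?_⟩
      rw [hT, Finset.mem_filter]
      exact ⟨Finset.mem_univ _,
        (Fin.strictMono_succAbove i).le_iff_le.2 hb.1, (delPerm_le π i b a).1 hb.2⟩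
    · intro a₁ _ a₂ _ h
      exact Fin.succAbove_right_injective h
    · intro j hj
      rw [Finset.mem_erase, hT, Finset.mem_filter] at hj
      obtain ⟨b, rfl⟩ := Fin.exists_succAbove_eq hj.1
      refine ⟨b, ?_, rfl⟩
      simp only [Finset.mem_filter, Finset.mem_univ, true_and]
      exact ⟨(Fin.strictMono_succAbove i).le_iff_le.1 hj.2.2.1,
        (delPerm_le π i b a).2 hj.2.2.2⟩
  have hiT : i ∈ T ↔ (i.succAbove a < i ∧ π i < π (i.succAbove a)) := by
    rw [hT, Finset.mem_filter]
    constructor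
    · rintro ⟨-, h1, h2⟩
      refine ⟨lt_of_le_of_ne h1 (Fin.succAbove_ne i a), lt_of_le_of_ne h2 ?_⟩
      intro h
      exact (Fin.succAbove_ne i a) (π.injective h).symm
    · rintro ⟨h1, h2⟩
      exact ⟨Finset.mem_univ _, le_of_lt h1, le_of_lt h2⟩
  have h2 : rankEnc π (i.succAbove a) = T.card := rfl
  rw [h1, h2]
  by_cases hi : i ∈ T
  · rw [if_pos (hiT.1 hi)]
    exact Finset.card_erase_add_one hi
  · rw [if_neg (fun hc => hi (hiT.2 hc))]
    rw [Finset.erase_eq_of_notMem hi, Nat.add_zero]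

/-- Two permutations with the same relative comparisons are equal. -/
lemma perm_eq_of_lt_iff {N : ℕ} (τ τ' : Equiv.Perm (Fin N))
    (h : ∀ a b, τ a < τ b ↔ τ' a < τ' b) : τ = τ' := by
  have hsm : StrictMono (fun x => τ' (τ.symm x)) := by
    intro x y hxy
    have : τ (τ.symm x) < τ (τ.symm y) := by simpa using hxy
    exact (h _ _).1 this
  have hrange : Set.range (fun x => τ' (τ.symm x)) = Set.range (id : Fin N → Fin N) := by
    rw [Set.range_id]
    exact Function.Surjective.range_eq (Function.Surjective.comp τ'.surjective τ.symm.surjective)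
  have hid : (fun x => τ' (τ.symm x)) = id := (StrictMono.range_inj hsm (strictMono_id (α := Fin N))).1 hrange
  ext a
  have h2 := congrFun hid (τ a)
  simpa using (congrArg Fin.val h2).symm

/-- An order embedding `Fin n ↪o Fin (n+1)` avoiding `i` is `succAbove i`. -/
lemma orderEmb_eq_succAbove {N : ℕ} (i : Fin (N + 1)) (e : Fin N ↪o Fin (N + 1))
    (he : ∀ j, e j ≠ i) : ∀ j, e j = i.succAbove j := by
  have h1 : ({i}ᶜ : Set (Fin (N+1))).ncard = N := by
    have := Set.ncard_add_ncard_compl ({i} : Set (Fin (N+1)))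
    rw [Set.ncard_singleton, Nat.card_eq_fintype_card, Fintype.card_fin] at this
    omega
  have h2 : (Set.range (e : Fin N → Fin (N+1))).ncard = N := by
    rw [← Set.image_univ, Set.ncard_image_of_injective _ e.injective, Set.ncard_univ,
      Nat.card_eq_fintype_card, Fintype.card_fin]
  have hr : Set.range (e : Fin N → Fin (N+1)) = Set.range i.succAbove := by
    rw [Fin.range_succAbove]
    apply Set.eq_of_subset_of_ncard_le
    · rintro x ⟨j, rfl⟩
      exact he j
    · rw [h1, h2]
    · exact Set.toFinite _
  have := (StrictMono.range_inj e.strictMono (Fin.strictMono_succAbove i)).1 hr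
  exact fun j => congrFun this j



lemma succAbove_val {n : ℕ} (w : Fin (n + 1)) (v : Fin n) :
    ((w.succAbove v : Fin (n + 1)) : ℕ) = if (v : ℕ) < (w : ℕ) then (v : ℕ) else (v : ℕ) + 1 := by
  by_cases h : (v : ℕ) < (w : ℕ)
  · rw [if_pos h, Fin.succAbove_of_castSucc_lt _ _ (by simpa [Fin.lt_def] using h)]
    rfl
  · rw [if_neg h, Fin.succAbove_of_le_castSucc _ _ (by simpa [Fin.le_def] using Nat.le_of_not_lt h)]
    rfl

/-- Encoding of a `consPerm`. -/
lemma enc_cons {n : ℕ} (w : Fin (n + 1)) (σ : Equiv.Perm (Fin n)) :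
    List.ofFn (rankEnc (consPerm w σ)) = ((w : ℕ) + 1) :: List.ofFn (rankEnc σ) := by
  rw [List.ofFn_succ]
  rw [rank_cons_zero]
  congr 1
  exact congrArg List.ofFn (funext fun a => rank_cons_succ w σ a)

/-- Deleting position 0 of a cons. -/
lemma enc_del_cons_zero {n : ℕ} (w : Fin (n + 1)) (σ : Equiv.Perm (Fin n)) :
    List.ofFn (rankEnc (delPerm (consPerm w σ) 0)) = List.ofFn (rankEnc σ) := by
  congr 1
  funext a
  have h := rank_del (consPerm w σ) 0 a
  simp only [Fin.zero_succAbove, rank_cons_succ] at h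
  have : ¬ ((a.succ : Fin (n+1)) < 0) := by simp [Fin.lt_def]
  simp only [this, false_and, ↓reduceIte, Nat.add_zero] at h
  exact h

lemma rank_del_cons_head {n : ℕ} (w : Fin (n + 2)) (σ : Equiv.Perm (Fin (n + 1)))
    (i' : Fin (n + 1)) :
    rankEnc (delPerm (consPerm w σ) i'.succ) 0
      = ((w : ℕ) + 1) - (if ((σ i' : Fin (n+1)) : ℕ) < (w : ℕ) then 1 else 0) := by
  have h := rank_del (consPerm w σ) i'.succ 0
  rw [Fin.succ_succAbove_zero, rank_cons_zero] at h
  have hzlt : (0 : Fin (n+2)) < i'.succ := by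
    simp [Fin.lt_def]
  have hcmp : (consPerm w σ i'.succ < consPerm w σ 0) ↔ ((σ i' : Fin (n+1)) : ℕ) < (w : ℕ) := by
    rw [consPerm_succ, consPerm_zero, Fin.lt_def, succAbove_val]
    constructor
    · intro hlt
      by_cases hc : ((σ i' : Fin (n+1)) : ℕ) < (w : ℕ)
      · exact hc
      · rw [if_neg hc] at hlt; omega
    · intro hc; rw [if_pos hc]; exact hc
  by_cases hc : ((σ i' : Fin (n+1)) : ℕ) < (w : ℕ)
  · rw [if_pos ⟨hzlt, hcmp.2 hc⟩] at h
    rw [if_pos hc]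
    omega
  · rw [if_neg (fun hx => hc (hcmp.1 hx.2)), Nat.add_zero] at h
    rw [if_neg hc]
    omega

lemma rank_del_cons_succ {n : ℕ} (w : Fin (n + 2)) (σ : Equiv.Perm (Fin (n + 1)))
    (i' : Fin (n + 1)) (a : Fin n) :
    rankEnc (delPerm (consPerm w σ) i'.succ) a.succ = rankEnc (delPerm σ i') a := by
  have h1 := rank_del (consPerm w σ) i'.succ a.succ
  rw [Fin.succ_succAbove_succ, rank_cons_succ] at h1
  have h2 := rank_del σ i' a
  have hlt : ((i'.succAbove a).succ < i'.succ) ↔ (i'.succAbove a < i') := Fin.succ_lt_succ_iff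
  have hv : (consPerm w σ i'.succ < consPerm w σ (i'.succAbove a).succ)
      ↔ (σ i' < σ (i'.succAbove a)) := by
    rw [consPerm_succ, consPerm_succ]
    exact (Fin.strictMono_succAbove w).lt_iff_lt
  by_cases hc : i'.succAbove a < i' ∧ σ i' < σ (i'.succAbove a)
  · rw [if_pos ⟨hlt.2 hc.1, hv.2 hc.2⟩] at h1
    rw [if_pos hc] at h2
    omega
  · rw [if_neg (fun hx => hc ⟨hlt.1 hx.1, hv.1 hx.2⟩)] at h1
    rw [if_neg hc] at h2
    omega

lemma enc_del_cons_succ {n : ℕ} (w : Fin (n + 2)) (σ : Equiv.Perm (Fin (n + 1)))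
    (i' : Fin (n + 1)) :
    List.ofFn (rankEnc (delPerm (consPerm w σ) i'.succ))
      = (((w : ℕ) + 1) - (if ((σ i' : Fin (n+1)) : ℕ) < (w : ℕ) then 1 else 0))
        :: List.ofFn (rankEnc (delPerm σ i')) := by
  rw [List.ofFn_succ]
  rw [rank_del_cons_head]
  congr 1
  exact congrArg List.ofFn (funext fun a => rank_del_cons_succ w σ i' a)

/-- rank bounds -/
lemma rank_pos {N : ℕ} (π : Equiv.Perm (Fin N)) (j : Fin N) : 1 ≤ rankEnc π j := by
  rw [rankEnc, Nat.succ_le_iff, Finset.card_pos]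
  exact ⟨j, by simp⟩

lemma rank_le {N : ℕ} (π : Equiv.Perm (Fin N)) (j : Fin N) : rankEnc π j + (j : ℕ) ≤ N := by
  have h : (Finset.univ.filter fun l : Fin N => j ≤ l ∧ π l ≤ π j) ⊆ Finset.Ici j := by
    intro l hl
    rw [Finset.mem_Ici]
    exact (Finset.mem_filter.1 hl).2.1
  have := Finset.card_le_card h
  rw [Fin.card_Ici] at this
  have : rankEnc π j ≤ N - (j : ℕ) := this
  have hj : (j : ℕ) < N := j.isLt
  omega

/-- fold for validity checking -/
def foldR (R : ℕ) (α : List ℕ) : ℕ := α.foldl (fun R c => max (R - 1) c) R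

@[simp] lemma foldR_nil (R : ℕ) : foldR R [] = R := rfl
@[simp] lemma foldR_cons (R c : ℕ) (α : List ℕ) :
    foldR R (c :: α) = foldR (max (R - 1) c) α := rfl

lemma le_foldR (R : ℕ) (α : List ℕ) : R ≤ foldR R α + α.length := by
  induction α generalizing R with
  | nil => simp
  | cons c α ih =>
    have := ih (max (R - 1) c)
    rw [foldR_cons]
    simp only [List.length_cons]
    omega

lemma foldR_le_one (α : List ℕ) (R : ℕ) (hR : R ≤ α.length + 1)
    (hα : ∀ (i : ℕ) (h : i < α.length), α[i] ≤ α.length - i) : foldR R α ≤ 1 := by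
  induction α generalizing R with
  | nil => simpa using hR
  | cons c α ih =>
    rw [foldR_cons]
    apply ih
    · have hc : c ≤ α.length + 1 := by
        have := hα 0 (by simp)
        simpa using this
      simp only [List.length_cons] at hR
      omega
    · intro i h
      have := hα (i + 1) (by simpa using Nat.succ_lt_succ h)
      simpa using this

lemma foldR_enc_le_one {N : ℕ} (π : Equiv.Perm (Fin N)) :
    foldR 0 (List.ofFn (rankEnc π)) ≤ 1 := by
  apply foldR_le_one
  · simp
  · intro i h
    have hN : i < N := by simpa using h
    have h2 : (List.ofFn (rankEnc π))[i] = rankEnc π ⟨i, hN⟩ := by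
      rw [List.getElem_ofFn]
    rw [h2, List.length_ofFn]
    have h3 : rankEnc π ⟨i, hN⟩ + i ≤ N := rank_le π ⟨i, hN⟩
    omega




lemma isDeletion_delPerm {n : ℕ} (π : Equiv.Perm (Fin (n + 1))) (i : Fin (n + 1)) :
    IsDeletion π i (delPerm π i) :=
  ⟨OrderEmbedding.ofStrictMono i.succAbove (Fin.strictMono_succAbove i),
    fun j => Fin.succAbove_ne i j, fun a b => delPerm_lt π i a b⟩

lemma isDeletion_unique {n : ℕ} (π : Equiv.Perm (Fin (n + 1))) (i : Fin (n + 1))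
    (π' : Equiv.Perm (Fin n)) (h : IsDeletion π i π') : π' = delPerm π i := by
  obtain ⟨e, he, hcmp⟩ := h
  apply perm_eq_of_lt_iff
  intro a b
  rw [hcmp a b, delPerm_lt, orderEmb_eq_succAbove i e he a, orderEmb_eq_succAbove i e he b]

/-! ### The transducer -/

abbrev St (k : ℕ) : Type := Option (Option (Fin (k+2)) × Fin (k+1))

def Rup (k : ℕ) (R : Fin (k+1)) (c : ℕ) : Fin (k+1) :=
  ⟨min (max ((R : ℕ) - 1) c) k, by omega⟩

lemma Rup_val {k : ℕ} (R : Fin (k+1)) {c : ℕ} (h : c ≤ k) :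
    ((Rup k R c) : ℕ) = max ((R : ℕ) - 1) c := by
  have := R.isLt
  simp only [Rup]
  omega

def stepF (k : ℕ) : St k → Option ℕ → Option ℕ → Set (St k)
  | none, none, none => {t | ∃ r : Fin (k+2), t = some (some r, (0 : Fin (k+1)))}
  | some (some r, R), some c, some gv => {t | 1 ≤ c ∧ c ≤ k ∧
      ((c < (r : ℕ) ∧ gv = c ∧ ∃ r' : Fin (k+2),
          ((r' : ℕ) = (r : ℕ) - 1 ∨ ((r : ℕ) = k+1 ∧ (r' : ℕ) = k+1))
          ∧ t = some (some r', Rup k R c))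
       ∨ ((r : ℕ) < c ∧ gv = c - 1 ∧ t = some (some r, Rup k R c)))}
  | some (some r, R), some c, none =>
      {t | 1 ≤ c ∧ c ≤ k ∧ c = (r : ℕ) ∧ t = some (none, Rup k R c)}
  | some (none, R), some c, some gv =>
      {t | 1 ≤ c ∧ c ≤ k ∧ gv = c ∧ t = some (none, Rup k R c)}
  | _, _, _ => ∅

def M (k : ℕ) : Transducer ℕ ℕ (St k) where
  start := none
  accept := {t | ∃ R : Fin (k+1), t = some (none, R) ∧ (R : ℕ) ≤ 1}
  step := stepF k

def RupL (k : ℕ) (R : Fin (k+1)) (q : List ℕ) : Fin (k+1) := q.foldl (Rup k) R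

@[simp] lemma RupL_nil (k : ℕ) (R : Fin (k+1)) : RupL k R [] = R := rfl
@[simp] lemma RupL_cons (k : ℕ) (R : Fin (k+1)) (c : ℕ) (q : List ℕ) :
    RupL k R (c :: q) = RupL k (Rup k R c) q := rfl

lemma RupL_val {k : ℕ} (q : List ℕ) (hq : ∀ c ∈ q, c ≤ k) :
    ∀ R : Fin (k+1), ((RupL k R q) : ℕ) = foldR (R : ℕ) q := by
  induction q with
  | nil => intro R; simp
  | cons c q ih =>
    intro R
    rw [RupL_cons, foldR_cons, ih (fun c hc => hq c (List.mem_cons_of_mem _ hc)),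
      Rup_val R (hq c List.mem_cons_self)]

/-! ### Forward construction (DelRel → Rel) -/

lemma phase2_path (k : ℕ) (q : List ℕ) (hq : ∀ c ∈ q, 1 ≤ c ∧ c ≤ k) :
    ∀ R : Fin (k+1), (M k).Path (some (none, R)) q q (some (none, RupL k R q)) := by
  induction q with
  | nil => intro R; exact Transducer.Path.nil _
  | cons c q ih =>
    intro R
    have hc := hq c List.mem_cons_self
    have hmem : some (none, Rup k R c) ∈ (M k).step (some (none, R)) (some c) (some c) :=
      ⟨hc.1, hc.2, rfl, rfl⟩
    exact Transducer.Path.cons hmem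
      (ih (fun c' hc' => hq c' (List.mem_cons_of_mem _ hc')) (Rup k R c))

lemma phase1_path (k : ℕ) : ∀ (n : ℕ) (π : Equiv.Perm (Fin (n+1))),
    (∀ j, rankEnc π j ≤ k) →
    ∀ (i : Fin (n+1)) (R : Fin (k+1)) (r : Fin (k+2)),
    (r : ℕ) = min ((π i : ℕ) + 1) (k+1) →
    (M k).Path (some (some r, R))
      (List.ofFn (rankEnc π)) (List.ofFn (rankEnc (delPerm π i)))
      (some (none, RupL k R (List.ofFn (rankEnc π)))) := by
  intro n
  induction n with
  | zero =>
    intro π h i R r hr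
    have hi : i = 0 := Fin.ext (by have := i.isLt; omega)
    subst hi
    have hπ0 : (π 0 : ℕ) = 0 := by have := (π 0).isLt; omega
    have h1 : rankEnc π 0 = 1 := by
      have h2 := rank_le π 0
      have h3 := rank_pos π 0
      simp only [Fin.val_zero] at h2
      omega
    have hk : 1 ≤ k := by have := h 0; omega
    have henc : List.ofFn (rankEnc π) = [1] := by
      rw [show (List.ofFn (rankEnc π)) = [rankEnc π 0] from by
        rw [List.ofFn_succ, List.ofFn_zero], h1]
    have henc' : List.ofFn (rankEnc (delPerm π 0)) = [] := List.ofFn_zero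
    rw [henc, henc']
    have hmem : some (none, Rup k R 1) ∈ (M k).step (some (some r, R)) (some 1) none :=
      ⟨le_refl 1, hk, by omega, rfl⟩
    have := Transducer.Path.cons hmem (Transducer.Path.nil (M := M k) (some (none, Rup k R 1)))
    simpa using this
  | succ m ih =>
    intro π h i R r hr
    obtain ⟨w, σ, rfl⟩ := consPerm_surjective π
    have hσ : ∀ j, rankEnc σ j ≤ k := by
      intro j
      have := h j.succ
      rwa [rank_cons_succ] at this
    have hw : (w : ℕ) + 1 ≤ k := by
      have := h 0
      rwa [rank_cons_zero] at this
    induction i using Fin.cases with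
    | zero =>
      -- deletion at position 0
      have hr0 : (r : ℕ) = (w : ℕ) + 1 := by
        rw [hr, consPerm_zero]; omega
      have hmem : some (none, Rup k R ((w : ℕ)+1)) ∈ (M k).step
          (some (some r, R)) (some ((w : ℕ)+1)) none :=
        ⟨by omega, hw, hr0.symm, rfl⟩
      have htail := phase2_path k (List.ofFn (rankEnc σ))
        (by
          intro c hc
          rw [List.mem_ofFn] at hc
          obtain ⟨j, rfl⟩ := hc
          exact ⟨rank_pos σ j, hσ j⟩) (Rup k R ((w : ℕ)+1))
      have hpath := Transducer.Path.cons hmem htail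
      rw [enc_cons, enc_del_cons_zero]
      simpa using hpath
    | succ i' =>
      have hvcase := succAbove_val w (σ i')
      set v : ℕ := ((σ i' : Fin (m+1)) : ℕ) with hv
      set r' : Fin (k+2) := ⟨min (v + 1) (k+1), by omega⟩ with hr'def
      have hr'v : (r' : ℕ) = min (((σ i' : Fin (m+1)) : ℕ) + 1) (k+1) := rfl
      have htail := ih σ hσ i' (Rup k R ((w : ℕ)+1)) r' hr'v
      by_cases hvw : v < (w : ℕ)
      -- the deleted value is below the current entry: output c - 1, keep state
      · have hπv : ((consPerm w σ i'.succ : Fin (m+2)) : ℕ) = v := by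
          rw [consPerm_succ, hvcase, if_pos hvw]
        have hrv : (r : ℕ) = v + 1 := by rw [hr, hπv]; omega
        have hrr' : r' = r := Fin.ext (by rw [hr'v, hrv]; omega)
        have hmem : some (some r', Rup k R ((w : ℕ)+1)) ∈ (M k).step
            (some (some r, R)) (some ((w : ℕ)+1)) (some ((w : ℕ)+1-1)) := by
          refine ⟨by omega, hw, Or.inr ⟨by omega, rfl, by rw [hrr']⟩⟩
        have hpath := Transducer.Path.cons hmem htail
        rw [enc_cons, enc_del_cons_succ, if_pos hvw]
        simpa using hpath
      -- the deleted value is above: output c, decrement state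
      · have hπv : ((consPerm w σ i'.succ : Fin (m+2)) : ℕ) = v + 1 := by
          rw [consPerm_succ, hvcase, if_neg hvw]
        have hrv : (r : ℕ) = min (v + 2) (k + 1) := by rw [hr, hπv]
        have hmem : some (some r', Rup k R ((w : ℕ)+1)) ∈ (M k).step
            (some (some r, R)) (some ((w : ℕ)+1)) (some ((w : ℕ)+1)) := by
          refine ⟨by omega, hw, Or.inl ⟨by omega, rfl, r', by rw [hr'v]; omega, rfl⟩⟩
        have hpath := Transducer.Path.cons hmem htail
        rw [enc_cons, enc_del_cons_succ, if_neg hvw]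
        simpa using hpath

lemma delRel_to_rel (k : ℕ) (p p' : List ℕ) (h : DelRel k p p') : (M k).Rel p p' := by
  obtain ⟨n, π, i, π', hranks, hdel, hp, hp'⟩ := h
  have hπ' : π' = delPerm π i := isDeletion_unique π i π' hdel
  subst hπ' hp hp'
  refine ⟨some (none, RupL k (0 : Fin (k+1)) (List.ofFn (rankEnc π))), ?_, ?_⟩
  · refine ⟨_, rfl, ?_⟩
    rw [RupL_val _ (fun c hc => by
      rw [List.mem_ofFn] at hc; obtain ⟨j, rfl⟩ := hc; exact hranks j)]
    have := foldR_enc_le_one π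
    simpa using this
  · have hmem : some (some ⟨min ((π i : ℕ) + 1) (k+1), by omega⟩, (0 : Fin (k+1)))
        ∈ (M k).step none none none :=
      ⟨⟨min ((π i : ℕ) + 1) (k+1), by omega⟩, rfl⟩
    have := Transducer.Path.cons hmem
      (phase1_path k n π hranks i 0 ⟨min ((π i : ℕ) + 1) (k+1), by omega⟩ rfl)
    show (M k).Path none _ _ _
    simpa using this




def Rof (k : ℕ) : St k → ℕ
  | none => 0
  | some (_, R) => (R : ℕ)

def Good1 (k r : ℕ) (α β : List ℕ) : Prop :=
  ∃ n, ∃ π : Equiv.Perm (Fin (n+1)), ∃ i : Fin (n+1),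
    (∀ j, rankEnc π j ≤ k) ∧ α = List.ofFn (rankEnc π) ∧
    β = List.ofFn (rankEnc (delPerm π i)) ∧ min ((π i : ℕ) + 1) (k+1) = r

def Good2 (k : ℕ) (α β : List ℕ) : Prop :=
  β = α ∧ ∃ m, ∃ σ : Equiv.Perm (Fin m), (∀ j, rankEnc σ j ≤ k) ∧ α = List.ofFn (rankEnc σ)

def Q (k : ℕ) (t : St k) : St k → List ℕ → List ℕ → Prop
  | none, α, β => DelRel k α β
  | some (some r, R), α, β =>
      Rof k t = foldR (R : ℕ) α ∧ (foldR (R : ℕ) α ≤ 1 → Good1 k (r : ℕ) α β)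
  | some (none, R), α, β =>
      Rof k t = foldR (R : ℕ) α ∧ (foldR (R : ℕ) α ≤ 1 → Good2 k α β)

lemma prepend_ranks {k c m : ℕ} (σ : Equiv.Perm (Fin m)) (hranks : ∀ j, rankEnc σ j ≤ k)
    (hc1 : 1 ≤ c) (hck : c ≤ k) (h : c - 1 < m + 1) :
    ∀ j, rankEnc (consPerm ⟨c-1, h⟩ σ) j ≤ k := by
  intro j
  induction j using Fin.cases with
  | zero => rw [rank_cons_zero]; simp only [Fin.val_mk]; omega
  | succ a => rw [rank_cons_succ]; exact hranks a

lemma c_le_of_fold {c : ℕ} (R : ℕ) {α : List ℕ}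
    (h : foldR (max (R - 1) c) α ≤ 1) : c ≤ α.length + 1 := by
  have h1 := le_foldR (max (R - 1) c) α
  omega

lemma inversion (k : ℕ) : ∀ (s : St k) (α β : List ℕ) (t : St k),
    (M k).Path s α β t → t ∈ (M k).accept → Q k t s α β := by
  intro s α β t h
  induction h with
  | nil s =>
    intro ht
    obtain ⟨R, rfl, hR⟩ := ht
    exact ⟨rfl, fun _ => ⟨rfl, 0, 1, fun j => j.elim0, List.ofFn_zero.symm⟩⟩
  | @cons s' t' u d g α' β' hstep hpath ihp =>
    intro ht
    have IH := ihp ht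
    have hstep' : t' ∈ stepF k s' d g := hstep
    -- case analysis on the source state and letters
    match s', d, g, hstep' with
    | none, none, none, hstep' =>
      obtain ⟨r0, rfl⟩ := hstep'
      obtain ⟨Rt, rfl, hRt⟩ := ht
      simp only [Option.toList, List.nil_append]
      show DelRel k α' β'
      obtain ⟨hfold, hsem⟩ := IH
      have hRof : Rof k (some (none, Rt)) = (Rt : ℕ) := rfl
      have h0 : ((0 : Fin (k+1)) : ℕ) = 0 := rfl
      rw [h0] at hfold hsem
      obtain ⟨n, π, i, hranks, hα, hβ, -⟩ := hsem (by rw [← hfold, hRof]; exact hRt)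
      exact ⟨n, π, i, delPerm π i, hranks, isDeletion_delPerm π i, hα, hβ⟩
    | some (some r, R), some c, some gv, hstep' =>
      obtain ⟨hc1, hck, hcase⟩ := hstep'
      show Rof k u = foldR (R : ℕ) (c :: α') ∧
        (foldR (R : ℕ) (c :: α') ≤ 1 → Good1 k (r : ℕ) (c :: α') (gv :: β'))
      rcases hcase with ⟨hcr, hgv, r'', hr''cond, rfl⟩ | ⟨hrc, hgv, rfl⟩
      · -- c < r : the current entry is below the deleted value; output letter unchanged
        obtain ⟨hfold, hsem⟩ := IH
        rw [Rup_val R hck] at hfold hsem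
        constructor
        · rw [foldR_cons]; exact hfold
        · intro hf
          have hf' : foldR (max ((R : ℕ) - 1) c) α' ≤ 1 := by
            rw [foldR_cons] at hf; exact hf
          obtain ⟨n, π, i, hranks, hα, hβ, hmin⟩ := hsem hf'
          have hlen : α'.length = n + 1 := by rw [hα, List.length_ofFn]
          have hcn : c ≤ n + 2 := by
            have := c_le_of_fold (R : ℕ) hf'
            omega
          have hw : c - 1 < n + 2 := by omega
          set w : Fin (n+2) := ⟨c-1, hw⟩ with hwdef
          have hwv : (w : ℕ) + 1 = c := by simp only [hwdef, Fin.val_mk]; omega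
          have hind : ¬ ((π i : ℕ) < (w : ℕ)) := by
            have hr2 := r.isLt
            simp only [hwdef, Fin.val_mk]
            omega
          refine ⟨n+1, consPerm w π, i.succ, prepend_ranks π hranks hc1 hck hw, ?_, ?_, ?_⟩
          · rw [enc_cons, hwv, hα]
          · rw [enc_del_cons_succ, if_neg hind, Nat.sub_zero, hwv, hβ, hgv]
          · have hsv := succAbove_val w (π i)
            rw [if_neg hind] at hsv
            rw [consPerm_succ, hsv]
            have hr2 := r.isLt
            omega
      · -- r < c : the current entry is above the deleted value; output letter decremented
        obtain ⟨hfold, hsem⟩ := IH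
        rw [Rup_val R hck] at hfold hsem
        constructor
        · rw [foldR_cons]; exact hfold
        · intro hf
          have hf' : foldR (max ((R : ℕ) - 1) c) α' ≤ 1 := by
            rw [foldR_cons] at hf; exact hf
          obtain ⟨n, π, i, hranks, hα, hβ, hmin⟩ := hsem hf'
          have hlen : α'.length = n + 1 := by rw [hα, List.length_ofFn]
          have hcn : c ≤ n + 2 := by
            have := c_le_of_fold (R : ℕ) hf'
            omega
          have hw : c - 1 < n + 2 := by omega
          set w : Fin (n+2) := ⟨c-1, hw⟩ with hwdef
          have hwv : (w : ℕ) + 1 = c := by simp only [hwdef, Fin.val_mk]; omega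
          have hπi : (π i : ℕ) + 1 = (r : ℕ) := by omega
          have hind : ((π i : ℕ) < (w : ℕ)) := by
            simp only [hwdef, Fin.val_mk]
            omega
          refine ⟨n+1, consPerm w π, i.succ, prepend_ranks π hranks hc1 hck hw, ?_, ?_, ?_⟩
          · rw [enc_cons, hwv, hα]
          · rw [enc_del_cons_succ, if_pos hind, hwv, hβ, hgv]
          · have hsv := succAbove_val w (π i)
            rw [if_pos hind] at hsv
            rw [consPerm_succ, hsv]
            omega
    | some (some r, R), some c, none, hstep' =>
      obtain ⟨hc1, hck, hcr, rfl⟩ := hstep'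
      show Rof k u = foldR (R : ℕ) (c :: α') ∧
        (foldR (R : ℕ) (c :: α') ≤ 1 → Good1 k (r : ℕ) (c :: α') β')
      obtain ⟨hfold, hsem⟩ := IH
      rw [Rup_val R hck] at hfold hsem
      constructor
      · rw [foldR_cons]; exact hfold
      · intro hf
        have hf' : foldR (max ((R : ℕ) - 1) c) α' ≤ 1 := by
          rw [foldR_cons] at hf; exact hf
        obtain ⟨hβα, m, σ, hranks, hα⟩ := hsem hf'
        have hlen : α'.length = m := by rw [hα, List.length_ofFn]
        have hcn : c ≤ m + 1 := by
          have := c_le_of_fold (R : ℕ) hf'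
          omega
        have hw : c - 1 < m + 1 := by omega
        set w : Fin (m+1) := ⟨c-1, hw⟩ with hwdef
        have hwv : (w : ℕ) + 1 = c := by simp only [hwdef, Fin.val_mk]; omega
        refine ⟨m, consPerm w σ, 0, prepend_ranks σ hranks hc1 hck hw, ?_, ?_, ?_⟩
        · rw [enc_cons, hwv, hα]
        · rw [enc_del_cons_zero, hβα, hα]
        · rw [consPerm_zero]
          simp only [hwdef, Fin.val_mk]
          omega
    | some (none, R), some c, some gv, hstep' =>
      obtain ⟨hc1, hck, hgv, rfl⟩ := hstep'
      show Rof k u = foldR (R : ℕ) (c :: α') ∧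
        (foldR (R : ℕ) (c :: α') ≤ 1 → Good2 k (c :: α') (gv :: β'))
      obtain ⟨hfold, hsem⟩ := IH
      rw [Rup_val R hck] at hfold hsem
      constructor
      · rw [foldR_cons]; exact hfold
      · intro hf
        have hf' : foldR (max ((R : ℕ) - 1) c) α' ≤ 1 := by
          rw [foldR_cons] at hf; exact hf
        obtain ⟨hβα, m, σ, hranks, hα⟩ := hsem hf'
        have hlen : α'.length = m := by rw [hα, List.length_ofFn]
        have hcn : c ≤ m + 1 := by
          have := c_le_of_fold (R : ℕ) hf'
          omega
        have hw : c - 1 < m + 1 := by omega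
        set w : Fin (m+1) := ⟨c-1, hw⟩ with hwdef
        have hwv : (w : ℕ) + 1 = c := by simp only [hwdef, Fin.val_mk]; omega
        refine ⟨by rw [hgv, hβα], m+1, consPerm w σ, prepend_ranks σ hranks hc1 hck hw, ?_⟩
        rw [enc_cons, hwv, hα]

lemma rel_to_delRel (k : ℕ) (p p' : List ℕ) (h : (M k).Rel p p') : DelRel k p p' := by
  obtain ⟨t, ht, hpath⟩ := h
  exact inversion k none p p' t hpath ht


end Stmt13Aux

/-- for each `k` there is a finite(-state) transducer defining the
deletion relation on `E(Ω_k)`. -/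
theorem stmt13 (k : ℕ) :
    ∃ (S : Type) (_ : Fintype S) (M : Transducer ℕ ℕ S),
      ∀ p p' : List ℕ, M.Rel p p' ↔ DelRel k p p' :=
  ⟨Stmt13Aux.St k, inferInstance, Stmt13Aux.M k,
    fun p p' => ⟨Stmt13Aux.rel_to_delRel k p p', Stmt13Aux.delRel_to_rel k p p'⟩⟩
end

section
/- A closed subset X of Ω_k is regular (i.e., E(X) is a regular language over [k]) if and only if its basis B(X) is regular (i.e., E(B(X)) is regular). -/
/-- A family of sets of permutations (one set per length) closed under involvement. -/
def ClosedFamily (X : ∀ n : ℕ, Set (Equiv.Perm (Fin n))) : Prop :=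
  ∀ (m n : ℕ) (π : Equiv.Perm (Fin m)) (σ : Equiv.Perm (Fin n)),
    σ ∈ X n → Involves π σ → π ∈ X m

/-- `β` belongs to the basis of `X`: `β` is not in `X`, but every strictly smaller
permutation (necessarily of smaller length) that is involved in `β` is in `X`;
i.e. `β` is a minimal permutation (under involvement) not in `X`. -/
def InBasis (X : ∀ n : ℕ, Set (Equiv.Perm (Fin n))) {m : ℕ} (β : Equiv.Perm (Fin m)) : Prop :=
  β ∉ X m ∧ ∀ l : ℕ, l < m → ∀ π : Equiv.Perm (Fin l), Involves π β → π ∈ X l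

namespace St15
open Finset

variable {n : ℕ}

/-- rank of the value `σ t` among the suffix of positions `≥ j`. -/
def rnk (σ : Equiv.Perm (Fin n)) (j : ℕ) (t : Fin n) : ℕ :=
  (Finset.univ.filter fun s : Fin n => j ≤ (s : ℕ) ∧ σ s ≤ σ t).card

lemma rankEnc_eq_rnk (σ : Equiv.Perm (Fin n)) (i : Fin n) : rankEnc σ i = rnk σ i i := by
  simp only [rankEnc, rnk, Fin.le_def]

lemma rnk_le_rnk (σ : Equiv.Perm (Fin n)) (j : ℕ) {t t' : Fin n} (h : σ t ≤ σ t') :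
    rnk σ j t ≤ rnk σ j t' := by
  apply Finset.card_le_card
  intro s hs
  simp only [mem_filter, mem_univ, true_and] at hs ⊢
  exact ⟨hs.1, le_trans hs.2 h⟩

lemma rnk_lt_rnk (σ : Equiv.Perm (Fin n)) {j : ℕ} {t t' : Fin n} (h : σ t < σ t')
    (ht' : j ≤ (t' : ℕ)) : rnk σ j t < rnk σ j t' := by
  apply Finset.card_lt_card
  constructor
  · intro s hs
    simp only [mem_filter, mem_univ, true_and] at hs ⊢
    exact ⟨hs.1, le_trans hs.2 h.le⟩
  · intro hsub
    have := hsub (by simp [ht'] : t' ∈ _)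
    simp only [mem_filter, mem_univ, true_and] at this
    exact absurd this.2 (not_le.mpr h)

lemma rnk_succ (σ : Equiv.Perm (Fin n)) (jF : Fin n) (t : Fin n) :
    rnk σ jF t = rnk σ ((jF : ℕ) + 1) t + (if σ jF ≤ σ t then 1 else 0) := by
  classical
  unfold rnk
  have hsplit : (Finset.univ.filter fun s : Fin n => (jF : ℕ) ≤ (s : ℕ) ∧ σ s ≤ σ t)
      = (Finset.univ.filter fun s : Fin n => (jF : ℕ) + 1 ≤ (s : ℕ) ∧ σ s ≤ σ t)
        ∪ (Finset.univ.filter fun s : Fin n => s = jF ∧ σ s ≤ σ t) := by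
    ext s
    simp only [mem_filter, mem_univ, true_and, mem_union]
    constructor
    · rintro ⟨h1, h2⟩
      rcases eq_or_lt_of_le h1 with h | h
      · exact Or.inr ⟨Fin.ext h.symm, h2⟩
      · exact Or.inl ⟨h, h2⟩
    · rintro (⟨h1, h2⟩ | ⟨h1, h2⟩)
      · exact ⟨le_of_lt (Nat.lt_of_succ_le h1), h2⟩  -- jF ≤ s
      · subst h1; exact ⟨le_refl _, h2⟩
  rw [hsplit, Finset.card_union_of_disjoint]
  · congr 1
    by_cases h : σ jF ≤ σ t
    · rw [if_pos h]
      rw [show (Finset.univ.filter fun s : Fin n => s = jF ∧ σ s ≤ σ t) = {jF} by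
        ext s; simp only [mem_filter, mem_univ, true_and, mem_singleton]
        constructor
        · rintro ⟨rfl, _⟩; rfl
        · rintro rfl; exact ⟨rfl, h⟩]
      simp
    · rw [if_neg h]
      rw [show (Finset.univ.filter fun s : Fin n => s = jF ∧ σ s ≤ σ t) = ∅ by
        ext s; simp only [mem_filter, mem_univ, true_and, Finset.notMem_empty, iff_false]
        rintro ⟨rfl, h2⟩; exact h h2]
      simp
  · rw [Finset.disjoint_left]
    intro s h1 h2
    simp only [mem_filter, mem_univ, true_and] at h1 h2
    rcases h2 with ⟨rfl, -⟩
    omega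

lemma one_le_rankEnc (σ : Equiv.Perm (Fin n)) (i : Fin n) : 1 ≤ rankEnc σ i := by
  rw [rankEnc]
  rw [Nat.succ_le_iff, Finset.card_pos]
  exact ⟨i, by simp⟩

lemma rankEnc_le_sub (σ : Equiv.Perm (Fin n)) (i : Fin n) : rankEnc σ i ≤ n - (i : ℕ) := by
  rw [rankEnc]
  calc (Finset.univ.filter fun j : Fin n => i ≤ j ∧ σ j ≤ σ i).card
      ≤ (Finset.univ.filter fun j : Fin n => i ≤ j).card := by
        apply Finset.card_le_card; intro s hs
        simp only [mem_filter, mem_univ, true_and] at hs ⊢; exact hs.1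
    _ = n - (i : ℕ) := by
        rw [show (Finset.univ.filter fun j : Fin n => i ≤ j) = Finset.Ici i by
          ext s; simp [Finset.mem_Ici]]
        simpa using Fin.card_Ici i

/-- Key lemma: comparison of `σ jF` with a later value is determined by the rank of
that value in the strictly-later suffix together with the rank-encoding letter at `jF`. -/
lemma cmp_iff_rnk (σ : Equiv.Perm (Fin n)) {jF t : Fin n} (hlt : (jF : ℕ) < (t : ℕ)) :
    σ jF < σ t ↔ rnk σ jF jF ≤ rnk σ ((jF : ℕ) + 1) t := by
  classical
  have hjFA : jF ∈ (Finset.univ.filter fun s : Fin n => (jF : ℕ) ≤ (s : ℕ) ∧ σ s ≤ σ jF) := by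
    simp
  have hrnkA : rnk σ jF jF
      = (Finset.univ.filter fun s : Fin n => (jF : ℕ) ≤ (s : ℕ) ∧ σ s ≤ σ jF).card := rfl
  have hrnkB : rnk σ ((jF : ℕ) + 1) t
      = (Finset.univ.filter fun s : Fin n => (jF : ℕ) + 1 ≤ (s : ℕ) ∧ σ s ≤ σ t).card := rfl
  constructor
  · intro h
    have hsub : insert t ((Finset.univ.filter
          fun s : Fin n => (jF : ℕ) ≤ (s : ℕ) ∧ σ s ≤ σ jF).erase jF) ⊆
        (Finset.univ.filter fun s : Fin n => (jF : ℕ) + 1 ≤ (s : ℕ) ∧ σ s ≤ σ t) := by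
      intro s hs
      rcases Finset.mem_insert.mp hs with rfl | hs
      · simp only [mem_filter, mem_univ, true_and]
        exact ⟨hlt, le_refl _⟩
      · rcases Finset.mem_erase.mp hs with ⟨hne, hsA⟩
        simp only [mem_filter, mem_univ, true_and] at hsA
        simp only [mem_filter, mem_univ, true_and]
        refine ⟨?_, le_trans hsA.2 h.le⟩
        rcases Nat.eq_or_lt_of_le hsA.1 with he | hl
        · exact absurd (Fin.ext he.symm) hne
        · exact hl
    have htne : t ∉ (Finset.univ.filter
        fun s : Fin n => (jF : ℕ) ≤ (s : ℕ) ∧ σ s ≤ σ jF).erase jF := by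
      intro hmem
      have := (Finset.mem_erase.mp hmem).2
      simp only [mem_filter, mem_univ, true_and] at this
      exact absurd this.2 (not_le.mpr h)
    have hc := Finset.card_le_card hsub
    rw [Finset.card_insert_of_notMem htne, Finset.card_erase_of_mem hjFA] at hc
    have hpos : 1 ≤ (Finset.univ.filter
        fun s : Fin n => (jF : ℕ) ≤ (s : ℕ) ∧ σ s ≤ σ jF).card :=
      Finset.card_pos.mpr ⟨jF, hjFA⟩
    rw [hrnkA, hrnkB]
    omega
  · intro h
    by_contra hnot
    have htj : t ≠ jF := by intro he; subst he; omega
    have hne : σ t ≠ σ jF := fun he => htj (σ.injective he)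
    have hlt' : σ t < σ jF := lt_of_le_of_ne (not_lt.mp hnot) hne
    have hsub : (Finset.univ.filter fun s : Fin n => (jF : ℕ) + 1 ≤ (s : ℕ) ∧ σ s ≤ σ t)
        ⊆ (Finset.univ.filter
          fun s : Fin n => (jF : ℕ) ≤ (s : ℕ) ∧ σ s ≤ σ jF).erase jF := by
      intro s hs
      simp only [mem_filter, mem_univ, true_and] at hs
      refine Finset.mem_erase.mpr ⟨?_, ?_⟩
      · intro he; subst he; omega
      · simp only [mem_filter, mem_univ, true_and]
        exact ⟨by omega, le_trans hs.2 hlt'.le⟩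
    have hc := Finset.card_le_card hsub
    rw [Finset.card_erase_of_mem hjFA] at hc
    have hpos : 1 ≤ (Finset.univ.filter
        fun s : Fin n => (jF : ℕ) ≤ (s : ℕ) ∧ σ s ≤ σ jF).card :=
      Finset.card_pos.mpr ⟨jF, hjFA⟩
    rw [hrnkA, hrnkB] at h
    omega


/- ### Section 2: injectivity of the rank encoding -/

lemma lt_flip {α : Type*} [LinearOrder α] {a b a' b' : α} (hab : a ≠ b) (hab' : a' ≠ b')
    (h : b < a ↔ b' < a') : a < b ↔ a' < b' := by
  constructor
  · intro hh
    rcases lt_trichotomy a' b' with h1 | h1 | h1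
    · exact h1
    · exact absurd h1 hab'
    · exact absurd (h.mpr h1) (not_lt.mpr hh.le)
  · intro hh
    rcases lt_trichotomy a b with h1 | h1 | h1
    · exact h1
    · exact absurd h1 hab
    · exact absurd (h.mp h1) (not_lt.mpr hh.le)

lemma cmp_determined {σ σ' : Equiv.Perm (Fin n)}
    (hEq : ∀ i, rankEnc σ i = rankEnc σ' i) :
    ∀ (d j : ℕ), n - j ≤ d → ∀ t t' : Fin n, j ≤ (t : ℕ) → j ≤ (t' : ℕ) →
      (σ t < σ t' ↔ σ' t < σ' t') := by
  intro d
  induction d with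
  | zero => intro j hj t _ ht _; omega
  | succ d ih =>
    intro j hj t t' ht ht'
    by_cases hn : n ≤ j
    · omega
    -- main case analysis
    have key : ∀ u u' : Fin n, (u : ℕ) = j → j < (u' : ℕ) → (σ u < σ u' ↔ σ' u < σ' u') := by
      intro u u' hu hu'
      have hr : rnk σ (j + 1) u' = rnk σ' (j + 1) u' := by
        unfold rnk
        congr 1
        apply Finset.filter_congr
        intro s _
        by_cases hs : j + 1 ≤ (s : ℕ)
        · simp only [hs, true_and]
          have hiff := ih (j+1) (by omega) u' s (by omega) hs
          constructor
          · intro hle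
            exact not_lt.mp (fun hc => absurd (hiff.mpr hc) (not_lt.mpr hle))
          · intro hle
            exact not_lt.mp (fun hc => absurd (hiff.mp hc) (not_lt.mpr hle))
        · simp [hs]
      have h1 := cmp_iff_rnk σ (jF := u) (t := u') (by omega)
      have h2 := cmp_iff_rnk σ' (jF := u) (t := u') (by omega)
      rw [h1, h2]
      rw [show rnk σ u u = rnk σ' u u by
        rw [← rankEnc_eq_rnk, ← rankEnc_eq_rnk]; exact hEq u]
      rw [show ((u : ℕ) + 1) = j + 1 by omega] at *
      rw [hr]
    rcases Nat.lt_trichotomy (t : ℕ) (t' : ℕ) with hc | hc | hc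
    · -- t < t'
      rcases Nat.eq_or_lt_of_le ht with he | hl
      · exact key t t' he.symm (by omega)
      · exact ih (j+1) (by omega) t t' (by omega) (by omega)
    · have : t = t' := Fin.ext hc
      subst this
      simp
    · rcases Nat.eq_or_lt_of_le ht' with he | hl
      · have htne : t ≠ t' := fun hh => by rw [hh] at hc; omega
        exact lt_flip (fun hh => htne (σ.injective hh)) (fun hh => htne (σ'.injective hh))
          (key t' t he.symm (by omega))
      · exact ih (j+1) (by omega) t t' (by omega) (by omega)

lemma rankEnc_injective {σ σ' : Equiv.Perm (Fin n)}
    (h : List.ofFn (rankEnc σ) = List.ofFn (rankEnc σ')) : σ = σ' := by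
  have hEq : ∀ i, rankEnc σ i = rankEnc σ' i := fun i => by
    have := List.ofFn_inj.mp h
    rw [this]
  have hcmp := cmp_determined hEq n 0 (by omega)
  have hmono : StrictMono (fun i => σ' (σ.symm i)) := by
    intro a b hab
    have := hcmp (σ.symm a) (σ.symm b) (Nat.zero_le _) (Nat.zero_le _)
    simp only [Equiv.apply_symm_apply] at this
    exact this.mp hab
  have hsurj : Function.Surjective (fun i => σ' (σ.symm i)) :=
    (σ.symm.trans σ').surjective
  have hiso_eq : StrictMono.orderIsoOfSurjective _ hmono hsurj = OrderIso.refl (Fin n) :=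
    Subsingleton.elim _ _
  have hfix : ∀ i : Fin n, σ' (σ.symm i) = i := by
    intro i
    have h1 := congrFun (StrictMono.coe_orderIsoOfSurjective _ hmono hsurj) i
    rw [hiso_eq] at h1
    simpa using h1.symm
  apply Equiv.ext
  intro x
  have := hfix (σ x)
  simpa using this.symm

/- ### Section 3: patterns -/

/-- The pattern of `σ` on the set of positions `K`. -/
noncomputable def patternOf (σ : Equiv.Perm (Fin n)) (K : Finset (Fin n)) :
    Equiv.Perm (Fin K.card) := by
  classical
  have hV : (K.image σ).card = K.card := Finset.card_image_of_injective K σ.injective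
  refine Equiv.ofBijective (fun b => ((K.image σ).orderIsoOfFin hV).symm
    ⟨σ (K.orderEmbOfFin rfl b), Finset.mem_image_of_mem σ (Finset.orderEmbOfFin_mem K rfl b)⟩)
    ?_
  rw [← Finite.injective_iff_bijective]
  intro b b' hbb
  have := congrArg ((K.image σ).orderIsoOfFin hV) hbb
  simp only [OrderIso.apply_symm_apply, Subtype.mk.injEq] at this
  exact (K.orderEmbOfFin rfl).injective (σ.injective this)

lemma patternOf_lt_iff (σ : Equiv.Perm (Fin n)) (K : Finset (Fin n)) (b b' : Fin K.card) :
    patternOf σ K b < patternOf σ K b' ↔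
      σ (K.orderEmbOfFin rfl b) < σ (K.orderEmbOfFin rfl b') := by
  classical
  unfold patternOf
  simp only [Equiv.ofBijective_apply]
  rw [OrderIso.lt_iff_lt]
  exact Iff.rfl

lemma involves_patternOf (σ : Equiv.Perm (Fin n)) (K : Finset (Fin n)) :
    Involves (patternOf σ K) σ :=
  ⟨K.orderEmbOfFin rfl, fun b b' => patternOf_lt_iff σ K b b'⟩

/-- relative rank encoding of `σ` on the set of positions `K`. -/
def encOn (σ : Equiv.Perm (Fin n)) (K : Finset (Fin n)) : List ℕ :=
  (K.sort (· ≤ ·)).map fun t => (K.filter fun s => t ≤ s ∧ σ s ≤ σ t).card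

lemma length_encOn (σ : Equiv.Perm (Fin n)) (K : Finset (Fin n)) :
    (encOn σ K).length = K.card := by
  classical
  simp [encOn, Finset.length_sort]

/-- Core counting fact: the `b`-th rank-encoding letter of any permutation `π` that is
involved in `σ` via an embedding `e` whose range is `K` equals the relative letter of `σ`. -/
lemma rankEnc_eq_relative {m : ℕ} (σ : Equiv.Perm (Fin n)) (π : Equiv.Perm (Fin m))
    (e : Fin m ↪o Fin n) (hiso : ∀ a b : Fin m, π a < π b ↔ σ (e a) < σ (e b))
    (K : Finset (Fin n)) (hK : ∀ s, s ∈ K ↔ ∃ b, e b = s) (b : Fin m) :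
    rankEnc π b = (K.filter fun s => e b ≤ s ∧ σ s ≤ σ (e b)).card := by
  classical
  unfold rankEnc
  apply Finset.card_bij (fun b' _ => e b')
  · intro b' hb'
    simp only [Finset.mem_filter, Finset.mem_univ, true_and] at hb'
    simp only [Finset.mem_filter]
    refine ⟨(hK (e b')).mpr ⟨b', rfl⟩, e.le_iff_le.mpr hb'.1, ?_⟩
    -- σ (e b') ≤ σ (e b) from π b' ≤ π b
    by_contra hcon
    have : σ (e b) < σ (e b') := not_le.mp hcon
    exact absurd ((hiso b b').mpr this) (not_lt.mpr hb'.2)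
  · intro b1 _ b2 _ hb
    exact e.injective hb
  · intro s hs
    simp only [Finset.mem_filter] at hs
    obtain ⟨b', rfl⟩ := (hK s).mp hs.1
    refine ⟨b', ?_, rfl⟩
    simp only [Finset.mem_filter, Finset.mem_univ, true_and]
    refine ⟨e.le_iff_le.mp hs.2.1, ?_⟩
    by_contra hcon
    have : π b < π b' := not_le.mp hcon
    exact absurd ((hiso b b').mp this) (not_lt.mpr hs.2.2)

lemma encOn_getElem (σ : Equiv.Perm (Fin n)) (K : Finset (Fin n)) {c : ℕ} (hc : K.card = c)
    (i : ℕ) (hi : i < c) :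
    (encOn σ K)[i]'(by rw [length_encOn, hc]; exact hi) =
      (K.filter fun s => (K.orderEmbOfFin hc ⟨i, hi⟩) ≤ s ∧
        σ s ≤ σ (K.orderEmbOfFin hc ⟨i, hi⟩)).card := by
  classical
  unfold encOn
  rw [List.getElem_map]
  simp only [Finset.orderEmbOfFin_apply, Fin.getElem_fin]
  rfl

lemma mem_iff_range {m : ℕ} (e : Fin m ↪o Fin n) (s : Fin n) :
    s ∈ Finset.univ.map e.toEmbedding ↔ ∃ b, e b = s := by
  simp [Finset.mem_map]

/-- If `π` is involved in `σ` via `e`, its rank encoding is the relative encoding of `σ`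
on the range of `e`. -/
lemma ofFn_rankEnc_of_involves {m : ℕ} (σ : Equiv.Perm (Fin n)) (π : Equiv.Perm (Fin m))
    (e : Fin m ↪o Fin n) (hiso : ∀ a b : Fin m, π a < π b ↔ σ (e a) < σ (e b)) :
    List.ofFn (rankEnc π) = encOn σ (Finset.univ.map e.toEmbedding) := by
  classical
  set K := Finset.univ.map e.toEmbedding with hKdef
  have hcard : K.card = m := by simp [hKdef]
  have heq : (fun b => e b) = K.orderEmbOfFin hcard := by
    apply Finset.orderEmbOfFin_unique hcard
    · intro x; exact (mem_iff_range e (e x)).mpr ⟨x, rfl⟩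
    · exact e.strictMono
  apply List.ext_getElem
  · simp [length_encOn, hcard]
  intro i h1 h2
  have hi : i < m := by simpa using h1
  rw [List.getElem_ofFn]
  rw [encOn_getElem σ K hcard i hi]
  have := rankEnc_eq_relative σ π e hiso K (mem_iff_range e) ⟨i, hi⟩
  rw [this]
  congr 2 <;> rw [← heq]

/-- The rank encoding of the pattern of `σ` on `K` is the relative encoding. -/
lemma ofFn_patternOf (σ : Equiv.Perm (Fin n)) (K : Finset (Fin n)) :
    List.ofFn (rankEnc (patternOf σ K)) = encOn σ K := by
  classical
  have := ofFn_rankEnc_of_involves σ (patternOf σ K) (K.orderEmbOfFin rfl)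
    (fun a b => patternOf_lt_iff σ K a b)
  rw [this]
  congr 1
  apply Finset.eq_of_subset_of_card_le
  · intro s hs
    rw [mem_iff_range] at hs
    obtain ⟨b, rfl⟩ := hs
    exact Finset.orderEmbOfFin_mem K rfl b
  · simp


/- ### Section 4: involvement basics, basis facts -/

lemma involves_refl (σ : Equiv.Perm (Fin n)) : Involves σ σ :=
  ⟨(OrderIso.refl (Fin n)).toOrderEmbedding, by simp⟩

lemma involves_trans {l m : ℕ} {π : Equiv.Perm (Fin l)} {τ : Equiv.Perm (Fin m)}
    {σ : Equiv.Perm (Fin n)} (h1 : Involves π τ) (h2 : Involves τ σ) : Involves π σ := by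
  obtain ⟨e1, he1⟩ := h1
  obtain ⟨e2, he2⟩ := h2
  exact ⟨e1.trans e2, fun a b => (he1 a b).trans (he2 (e1 a) (e1 b))⟩

lemma involves_card_le {m : ℕ} {π : Equiv.Perm (Fin m)} {σ : Equiv.Perm (Fin n)}
    (h : Involves π σ) : m ≤ n := by
  obtain ⟨e, -⟩ := h
  simpa using Fintype.card_le_of_embedding e.toEmbedding

lemma exists_basis_involved (X : ∀ n : ℕ, Set (Equiv.Perm (Fin n))) :
    ∀ (n : ℕ) (σ : Equiv.Perm (Fin n)), σ ∉ X n →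
      ∃ (m : ℕ) (β : Equiv.Perm (Fin m)), InBasis X β ∧ Involves β σ := by
  intro n
  induction n using Nat.strong_induction_on with
  | _ n ih =>
    intro σ hσ
    by_cases hall : ∀ l : ℕ, l < n → ∀ π : Equiv.Perm (Fin l), Involves π σ → π ∈ X l
    · exact ⟨n, σ, ⟨hσ, hall⟩, involves_refl σ⟩
    · push_neg at hall
      obtain ⟨l, hl, π, hinv, hπ⟩ := hall
      obtain ⟨m, β, hbasis, hinv'⟩ := ih l hl π hπ
      exact ⟨m, β, hbasis, involves_trans hinv' hinv⟩

lemma encOn_letter_le (σ : Equiv.Perm (Fin n)) (K : Finset (Fin n)) {x : ℕ}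
    (hx : x ∈ encOn σ K) : ∃ t : Fin n, x ≤ rankEnc σ t := by
  classical
  unfold encOn at hx
  rw [List.mem_map] at hx
  obtain ⟨t, _, rfl⟩ := hx
  refine ⟨t, ?_⟩
  unfold rankEnc
  apply Finset.card_le_card
  intro s hs
  simp only [Finset.mem_filter] at hs ⊢
  exact ⟨Finset.mem_univ s, hs.2.1, hs.2.2⟩

lemma rankEnc_last {m : ℕ} (β : Equiv.Perm (Fin (m + 1))) :
    rankEnc β ⟨m, Nat.lt_succ_self m⟩ = 1 := by
  unfold rankEnc
  rw [show (Finset.univ.filter fun j : Fin (m+1) =>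
      (⟨m, Nat.lt_succ_self m⟩ : Fin (m+1)) ≤ j ∧ β j ≤ β ⟨m, Nat.lt_succ_self m⟩)
      = {⟨m, Nat.lt_succ_self m⟩} by
    ext j
    simp only [Finset.mem_filter, Finset.mem_univ, true_and, Finset.mem_singleton]
    constructor
    · rintro ⟨h1, -⟩
      apply Fin.ext
      have hj := j.isLt
      have h1' := (Fin.le_def).mp h1
      simp only [Fin.val_mk] at h1' ⊢
      omega
    · rintro rfl
      exact ⟨le_refl _, le_refl _⟩]
  rfl

lemma basis_letter_bound {k : ℕ} {X : ∀ n : ℕ, Set (Equiv.Perm (Fin n))}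
    (hsub : ∀ n : ℕ, ∀ π ∈ X n, ∀ i, rankEnc π i ≤ k)
    {m : ℕ} {β : Equiv.Perm (Fin m)} (hβ : InBasis X β) (i : Fin m) :
    rankEnc β i ≤ k + 1 := by
  classical
  rcases m with - | m'
  · exact absurd i.isLt (by omega)
  by_cases hlast : (i : ℕ) = m'
  · have : i = ⟨m', Nat.lt_succ_self m'⟩ := Fin.ext hlast
    rw [this, rankEnc_last]
    omega
  · -- delete the last position
    set llast : Fin (m' + 1) := ⟨m', Nat.lt_succ_self m'⟩ with hllast
    set K : Finset (Fin (m' + 1)) := Finset.univ.erase llast with hKdef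
    have hKcard : K.card = m' := by
      rw [hKdef, Finset.card_erase_of_mem (Finset.mem_univ _)]
      simp
    have hπX : patternOf β K ∈ X K.card := by
      apply hβ.2
      · rw [hKcard]; omega
      · exact involves_patternOf β K
    have hiK : i ∈ K := by
      rw [hKdef]
      exact Finset.mem_erase.mpr ⟨fun hh => hlast (by rw [hh]), Finset.mem_univ _⟩
    -- the relative letter at i
    have hrange : ∃ b : Fin K.card, K.orderEmbOfFin rfl b = i := by
      have : (i : Fin (m'+1)) ∈ Set.range (K.orderEmbOfFin rfl) := by
        rw [Finset.range_orderEmbOfFin]; exact hiK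
      exact this
    obtain ⟨b, hb⟩ := hrange
    have hrel := rankEnc_eq_relative β (patternOf β K) (K.orderEmbOfFin rfl)
      (fun a b => patternOf_lt_iff β K a b) K
      (fun s => by
        constructor
        · intro hs
          have : s ∈ Set.range (K.orderEmbOfFin rfl) := by
            rw [Finset.range_orderEmbOfFin]; exact hs
          exact this
        · rintro ⟨b', rfl⟩; exact Finset.orderEmbOfFin_mem K rfl b') b
    rw [hb] at hrel
    have hπb : rankEnc (patternOf β K) b ≤ k := hsub _ _ hπX b
    -- rankEnc β i ≤ relative letter + 1
    have hsubset : (Finset.univ.filter fun j : Fin (m'+1) => i ≤ j ∧ β j ≤ β i)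
        ⊆ insert llast (K.filter fun s => i ≤ s ∧ β s ≤ β i) := by
      intro j hj
      simp only [Finset.mem_filter, Finset.mem_univ, true_and] at hj
      by_cases hje : j = llast
      · subst hje; exact Finset.mem_insert_self _ _
      · apply Finset.mem_insert_of_mem
        rw [Finset.mem_filter]
        exact ⟨Finset.mem_erase.mpr ⟨hje, Finset.mem_univ _⟩, hj⟩
    have hcard := Finset.card_le_card hsubset
    have hcard2 := Finset.card_insert_le llast (K.filter fun s => i ≤ s ∧ β s ≤ β i)
    unfold rankEnc
    omega

lemma encOn_univ (σ : Equiv.Perm (Fin n)) :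
    encOn σ Finset.univ = List.ofFn (rankEnc σ) := by
  classical
  have := ofFn_rankEnc_of_involves σ σ (OrderIso.refl (Fin n)).toOrderEmbedding (by simp)
  rw [this]
  congr 1
  refine (Finset.eq_univ_of_card _ ?_).symm
  simp


/- ### Section 5: the (reversed) deletion transducer -/

def shiftf (a r : ℕ) : ℕ := if a ≤ r then r + 1 else r

def stepT (k : ℕ) (T : Finset ℕ) (g : ℕ × Bool) : Finset ℕ :=
  (if g.2 then insert g.1 (T.image (shiftf g.1)) else T.image (shiftf g.1)).filter
    (fun r => r ≤ k + 1)

def outLetter (T : Finset ℕ) (g : ℕ × Bool) : Option ℕ :=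
  if g.2 then none else some (g.1 - (T.filter (fun r => r < g.1)).card)

def outList (k : ℕ) : Finset ℕ → List (ℕ × Bool) → List ℕ
  | _, [] => []
  | T, g :: μ => (outLetter T g).toList ++ outList k (stepT k T g) μ

/-- The truncated set of ranks (relative to the suffix starting at `j`) of the
pending deleted values at positions `≥ j`. -/
def pend (k : ℕ) (σ : Equiv.Perm (Fin n)) (S : Finset (Fin n)) (j : ℕ) : Finset ℕ :=
  ((S.filter fun t => j ≤ t.val).image fun t => rnk σ j t).filter (fun r => r ≤ k + 1)

lemma mem_pend (k : ℕ) (σ : Equiv.Perm (Fin n)) (S : Finset (Fin n)) (j : ℕ) (r : ℕ) :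
    r ∈ pend k σ S j ↔ (∃ t, t ∈ S ∧ j ≤ t.val ∧ rnk σ j t = r) ∧ r ≤ k + 1 := by
  unfold pend
  simp only [Finset.mem_filter, Finset.mem_image]
  constructor
  · rintro ⟨⟨t, ht, rfl⟩, h2⟩
    exact ⟨⟨t, ht.1, ht.2, rfl⟩, h2⟩
  · rintro ⟨⟨t, ht1, ht2, rfl⟩, h2⟩
    exact ⟨⟨t, ⟨ht1, ht2⟩, rfl⟩, h2⟩

lemma pend_top (k : ℕ) (σ : Equiv.Perm (Fin n)) (S : Finset (Fin n)) :
    pend k σ S n = ∅ := by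
  ext r
  rw [mem_pend]
  simp only [Finset.notMem_empty, iff_false]
  rintro ⟨⟨t, -, ht, -⟩, -⟩
  exact absurd t.isLt (by omega)

lemma rnk_succ_le (σ : Equiv.Perm (Fin n)) (j : ℕ) (t : Fin n) :
    rnk σ (j + 1) t ≤ rnk σ j t := by
  apply Finset.card_le_card
  intro x hx
  simp only [Finset.mem_filter, Finset.mem_univ, true_and] at hx ⊢
  exact ⟨by omega, hx.2⟩

/-- KEY 1: the transducer's state update tracks the pending rank sets. -/
lemma stepT_pend (k : ℕ) (σ : Equiv.Perm (Fin n)) (S : Finset (Fin n))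
    {j : ℕ} (hj : j < n) :
    stepT k (pend k σ S (j + 1)) (rankEnc σ ⟨j, hj⟩, decide (⟨j, hj⟩ ∈ S)) = pend k σ S j := by
  classical
  set jF : Fin n := ⟨j, hj⟩ with hjF
  have himg : ∀ t : Fin n, j + 1 ≤ t.val →
      shiftf (rankEnc σ jF) (rnk σ (j + 1) t) = rnk σ j t := by
    intro t htj
    have hlt : (jF : ℕ) < (t : ℕ) := by simp only [hjF, Fin.val_mk]; omega
    have hcmp := cmp_iff_rnk σ hlt
    have hsucc := rnk_succ σ jF t
    have hjval : (jF : ℕ) = j := rfl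
    rw [rankEnc_eq_rnk]
    unfold shiftf
    by_cases hc : rnk σ ((jF : ℕ)) jF ≤ rnk σ ((jF : ℕ) + 1) t
    · have hσ : σ jF < σ t := hcmp.mpr hc
      rw [hjval] at hc
      rw [if_pos hc]
      rw [if_pos hσ.le, hjval] at hsucc
      omega
    · have hσ : ¬ σ jF < σ t := fun hh => hc (hcmp.mp hh)
      have hne : σ jF ≠ σ t := by
        intro he
        have : jF = t := σ.injective he
        rw [this] at hlt; omega
      have hσ' : ¬ σ jF ≤ σ t := fun hh => hσ (lt_of_le_of_ne hh hne)
      rw [hjval] at hc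
      rw [if_neg hc]
      rw [if_neg hσ', hjval] at hsucc
      omega
  have hself : rnk σ j jF = rankEnc σ jF := by
    rw [rankEnc_eq_rnk]
  by_cases hd : jF ∈ S
  · rw [show decide (jF ∈ S) = true by simp [hd]]
    ext r
    rw [mem_pend]
    unfold stepT
    simp only [if_true, Finset.mem_filter, Finset.mem_insert, Finset.mem_image]
    constructor
    · rintro ⟨hcase, hrk⟩
      refine ⟨?_, hrk⟩
      rcases hcase with heq | ⟨r', hr', rfl⟩
      · exact ⟨jF, hd, le_refl _, by rw [hself, heq]⟩
      · rw [mem_pend] at hr'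
        obtain ⟨⟨t, htS, htj, rfl⟩, -⟩ := hr'
        exact ⟨t, htS, by omega, (himg t htj).symm⟩
    · rintro ⟨⟨t, htS, htj, rfl⟩, hrk⟩
      refine ⟨?_, hrk⟩
      by_cases hc : j + 1 ≤ t.val
      · right
        refine ⟨rnk σ (j+1) t, ?_, himg t hc⟩
        rw [mem_pend]
        exact ⟨⟨t, htS, hc, rfl⟩, le_trans (rnk_succ_le σ j t) hrk⟩
      · left
        have : t = jF := Fin.ext (show t.val = j by omega)
        rw [this, hself]
  · rw [show decide (jF ∈ S) = false by simp [hd]]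
    ext r
    rw [mem_pend]
    unfold stepT
    simp only [if_false, Bool.false_eq_true, Finset.mem_filter, Finset.mem_image]
    constructor
    · rintro ⟨⟨r', hr', rfl⟩, hrk⟩
      refine ⟨?_, hrk⟩
      rw [mem_pend] at hr'
      obtain ⟨⟨t, htS, htj, rfl⟩, -⟩ := hr'
      exact ⟨t, htS, by omega, (himg t htj).symm⟩
    · rintro ⟨⟨t, htS, htj, rfl⟩, hrk⟩
      refine ⟨?_, hrk⟩
      have hc : j + 1 ≤ t.val := by
        rcases Nat.eq_or_lt_of_le htj with he | hl
        · exact absurd (Fin.ext he.symm : t = jF) (fun hh => hd (hh ▸ htS))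
        · exact hl
      refine ⟨rnk σ (j+1) t, ?_, himg t hc⟩
      rw [mem_pend]
      exact ⟨⟨t, htS, hc, rfl⟩, le_trans (rnk_succ_le σ j t) hrk⟩


/-- KEY 2: the output letter of a kept position. -/
lemma outLetter_pend (k : ℕ) (σ : Equiv.Perm (Fin n)) (S : Finset (Fin n))
    {j : ℕ} (hj : j < n) (hd : (⟨j, hj⟩ : Fin n) ∉ S)
    (hbd : rankEnc σ ⟨j, hj⟩ ≤ k + 1) :
    rankEnc σ ⟨j, hj⟩ - ((pend k σ S (j + 1)).filter (fun r => r < rankEnc σ ⟨j, hj⟩)).card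
      = (Sᶜ.filter fun s => (⟨j, hj⟩ : Fin n) ≤ s ∧ σ s ≤ σ ⟨j, hj⟩).card := by
  classical
  set jF : Fin n := ⟨j, hj⟩ with hjF
  set w := rankEnc σ jF with hw
  set A := Sᶜ.filter fun s => jF ≤ s ∧ σ s ≤ σ jF with hA
  set B := S.filter fun s => jF ≤ s ∧ σ s ≤ σ jF with hB
  have h1 : w = A.card + B.card := by
    rw [hw, hA, hB]
    unfold rankEnc
    rw [← Finset.card_union_of_disjoint
      (Finset.disjoint_filter_filter (disjoint_compl_left (a := S)))]
    congr 1
    rw [← Finset.filter_union]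
    congr 1
    ext s
    simp only [Finset.mem_union, Finset.mem_compl, Finset.mem_univ, true_iff]
    tauto
  -- now the filtered pending set
  have h2 : (pend k σ S (j + 1)).filter (fun r => r < w)
      = ((S.filter fun t => j + 1 ≤ t.val ∧ rnk σ (j+1) t < w).image fun t => rnk σ (j+1) t) := by
    ext r
    rw [Finset.mem_filter, mem_pend, Finset.mem_image]
    constructor
    · rintro ⟨⟨⟨t, htS, htj, rfl⟩, -⟩, hlt⟩
      exact ⟨t, Finset.mem_filter.mpr ⟨htS, htj, hlt⟩, rfl⟩
    · rintro ⟨t, ht, rfl⟩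
      rw [Finset.mem_filter] at ht
      exact ⟨⟨⟨t, ht.1, ht.2.1, rfl⟩, by omega⟩, ht.2.2⟩
  have h3 : ((S.filter fun t => j + 1 ≤ t.val ∧ rnk σ (j+1) t < w).image
      fun t => rnk σ (j+1) t).card
      = (S.filter fun t => j + 1 ≤ t.val ∧ rnk σ (j+1) t < w).card := by
    apply Finset.card_image_of_injOn
    intro t ht t' ht' heq
    simp only [Finset.coe_filter, Set.mem_setOf_eq] at ht ht'
    by_contra hne
    have hσne : σ t ≠ σ t' := fun hh => hne (σ.injective hh)
    rcases lt_or_gt_of_ne hσne with hlt | hlt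
    · exact absurd heq (Nat.ne_of_lt (rnk_lt_rnk σ hlt ht'.2.1))
    · exact absurd heq.symm (Nat.ne_of_lt (rnk_lt_rnk σ hlt ht.2.1))
  have h4 : (S.filter fun t => j + 1 ≤ t.val ∧ rnk σ (j+1) t < w) = B := by
    rw [hB]
    apply Finset.filter_congr
    intro t htS
    have htne : t ≠ jF := fun hh => hd (hh ▸ htS)
    constructor
    · rintro ⟨htj, hlt⟩
      have hcmp := cmp_iff_rnk σ (jF := jF) (t := t) (by show j < t.val; omega)
      rw [← rankEnc_eq_rnk, ← hw] at hcmp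
      rw [show ((jF : ℕ) + 1) = j + 1 from rfl] at hcmp
      have : ¬ σ jF < σ t := fun hh => by
        have := hcmp.mp hh
        show False
        omega
      exact ⟨show j ≤ t.val by omega, not_lt.mp this⟩
    · rintro ⟨htj, hle⟩
      have htj' : j + 1 ≤ t.val := by
        have h5 : j ≤ t.val := htj
        have hne' : t.val ≠ j := fun hh => htne (Fin.ext hh)
        omega
      refine ⟨htj', ?_⟩
      have hcmp := cmp_iff_rnk σ (jF := jF) (t := t) (by show j < t.val; omega)
      rw [← rankEnc_eq_rnk, ← hw] at hcmp
      rw [show ((jF : ℕ) + 1) = j + 1 from rfl] at hcmp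
      have hσne : σ t ≠ σ jF := fun hh => htne (σ.injective hh)
      have : ¬ σ jF < σ t := not_lt.mpr (lt_of_le_of_ne hle hσne).le
      have := fun hh => this (hcmp.mpr hh)
      omega
  rw [h2, h3, h4]
  omega

/- sorted-list filter decomposition -/

lemma filter_eq_single {α : Type*} [DecidableEq α] :
    ∀ (l : List α), l.Nodup → ∀ a : α,
      l.filter (fun x => x = a) = if a ∈ l then [a] else [] := by
  intro l
  induction l with
  | nil => intro _ a; simp
  | cons b l ih =>
    intro hnd a
    rw [List.nodup_cons] at hnd
    by_cases hba : b = a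
    · subst hba
      have : l.filter (fun x => x = b) = [] := by
        rw [List.filter_eq_nil_iff]
        intro x hx
        simp only [decide_eq_true_eq]
        intro hh; subst hh; exact hnd.1 hx
      simp [List.filter_cons, this]
    · rw [List.filter_cons, if_neg (by simp [hba]), ih hnd.2 a]
      by_cases hal : a ∈ l
      · rw [if_pos hal, if_pos (List.mem_cons_of_mem b hal)]
      · rw [if_neg hal, if_neg (by
          intro hh
          rcases List.mem_cons.mp hh with hh | hh
          · exact hba hh.symm
          · exact hal hh)]

lemma filter_lt_succ (j : ℕ) :
    ∀ (l : List (Fin n)), l.Pairwise (· < ·) → l.Nodup →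
      l.filter (fun t => t.val < j + 1)
        = l.filter (fun t => t.val < j) ++ l.filter (fun t => t.val = j) := by
  intro l
  induction l with
  | nil => intro _ _; simp
  | cons a l ih =>
    intro hs hnd
    rw [List.pairwise_cons] at hs
    rw [List.nodup_cons] at hnd
    rcases Nat.lt_trichotomy a.val j with hc | hc | hc
    · rw [List.filter_cons, List.filter_cons, List.filter_cons]
      rw [if_pos (by simp; omega), if_pos (by simp [hc]), if_neg (by simp; omega)]
      rw [ih hs.2 hnd.2]
      simp
    · have hlgt : ∀ b ∈ l, j < b.val := by
        intro b hb
        have := hs.1 b hb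
        rw [Fin.lt_def] at this
        omega
      have h1 : l.filter (fun t => t.val < j + 1) = [] := by
        rw [List.filter_eq_nil_iff]; intro x hx; simp only [decide_eq_true_eq]
        have := hlgt x hx; omega
      have h2 : l.filter (fun t => t.val < j) = [] := by
        rw [List.filter_eq_nil_iff]; intro x hx; simp only [decide_eq_true_eq]
        have := hlgt x hx; omega
      have h3 : l.filter (fun t => t.val = j) = [] := by
        rw [List.filter_eq_nil_iff]; intro x hx; simp only [decide_eq_true_eq]
        have := hlgt x hx; omega
      rw [List.filter_cons, List.filter_cons, List.filter_cons]
      rw [if_pos (by simp; omega), if_neg (by simp; omega), if_pos (by simp [hc])]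
      rw [h1, h2, h3]
      simp
    · have hlgt : ∀ b ∈ l, j < b.val := by
        intro b hb
        have := hs.1 b hb
        rw [Fin.lt_def] at this
        omega
      have h1 : l.filter (fun t => t.val < j + 1) = [] := by
        rw [List.filter_eq_nil_iff]; intro x hx; simp only [decide_eq_true_eq]
        have := hlgt x hx; omega
      have h2 : l.filter (fun t => t.val < j) = [] := by
        rw [List.filter_eq_nil_iff]; intro x hx; simp only [decide_eq_true_eq]
        have := hlgt x hx; omega
      have h3 : l.filter (fun t => t.val = j) = [] := by
        rw [List.filter_eq_nil_iff]; intro x hx; simp only [decide_eq_true_eq]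
        have := hlgt x hx; omega
      rw [List.filter_cons, List.filter_cons, List.filter_cons]
      rw [if_neg (by simp; omega), if_neg (by simp; omega), if_neg (by simp; omega)]
      rw [h1, h2, h3]
      simp


/-- the reversed tagged word of `σ` with deletion set `S`, first `j` positions. -/
def taggedTo (σ : Equiv.Perm (Fin n)) (S : Finset (Fin n)) (j : ℕ) : List (ℕ × Bool) :=
  ((List.ofFn fun i : Fin n => (rankEnc σ i, decide (i ∈ S))).take j).reverse

lemma outList_taggedTo (k : ℕ) (σ : Equiv.Perm (Fin n)) (S : Finset (Fin n))
    (hbd : ∀ i, rankEnc σ i ≤ k + 1) :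
    ∀ j, j ≤ n → outList k (pend k σ S j) (taggedTo σ S j)
      = (((Sᶜ.sort (· ≤ ·)).filter (fun t => t.val < j)).map
          (fun t => (Sᶜ.filter fun s => t ≤ s ∧ σ s ≤ σ t).card)).reverse := by
  intro j
  induction j with
  | zero =>
    intro _
    rw [show ((Sᶜ.sort (· ≤ ·)).filter (fun t => t.val < 0)) = [] by
      rw [List.filter_eq_nil_iff]; intro x _; simp]
    unfold taggedTo
    simp [outList]
  | succ j ih =>
    intro hj
    have hjn : j < n := hj
    set jF : Fin n := ⟨j, hjn⟩ with hjF
    have hstep : taggedTo σ S (j + 1)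
        = (rankEnc σ jF, decide (jF ∈ S)) :: taggedTo σ S j := by
      unfold taggedTo
      rw [List.take_succ]
      rw [List.reverse_append]
      congr 1
      rw [show (List.ofFn fun i : Fin n => (rankEnc σ i, decide (i ∈ S)))[j]?
          = some (rankEnc σ jF, decide (jF ∈ S)) by
        rw [List.getElem?_eq_getElem (by simpa using hjn)]
        congr 1
        rw [List.getElem_ofFn]]
      rfl
    rw [hstep]
    rw [show outList k (pend k σ S (j+1)) ((rankEnc σ jF, decide (jF ∈ S)) :: taggedTo σ S j)
        = (outLetter (pend k σ S (j+1)) (rankEnc σ jF, decide (jF ∈ S))).toList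
          ++ outList k (stepT k (pend k σ S (j+1)) (rankEnc σ jF, decide (jF ∈ S)))
              (taggedTo σ S j) from rfl]
    rw [stepT_pend k σ S hjn, ih (by omega)]
    rw [filter_lt_succ j _ (Finset.sortedLT_sort Sᶜ).pairwise (Finset.sort_nodup _ _)]
    rw [show ((Sᶜ.sort (· ≤ ·)).filter (fun t => t.val = j))
        = (Sᶜ.sort (· ≤ ·)).filter (fun t => t = jF) by
      apply List.filter_congr
      intro t _
      simp only [decide_eq_decide]
      constructor
      · intro hh; exact Fin.ext hh
      · rintro rfl; rfl]
    rw [filter_eq_single _ (Finset.sort_nodup _ _) jF]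
    rw [List.map_append, List.reverse_append]
    by_cases hd : jF ∈ S
    · rw [if_neg (by rw [Finset.mem_sort, Finset.mem_compl]; exact fun hh => hh hd)]
      rw [show outLetter (pend k σ S (j+1)) (rankEnc σ jF, decide (jF ∈ S)) = none by
        unfold outLetter
        rw [if_pos (by simp [hd])]]
      simp
    · rw [if_pos (by rw [Finset.mem_sort, Finset.mem_compl]; exact hd)]
      rw [show outLetter (pend k σ S (j+1)) (rankEnc σ jF, decide (jF ∈ S))
          = some ((Sᶜ.filter fun s => jF ≤ s ∧ σ s ≤ σ jF).card) by
        unfold outLetter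
        rw [if_neg (by simp [hd])]
        congr 1
        exact outLetter_pend k σ S hjn hd (hbd jF)]
      simp

/-- MAIN TRANSDUCER LEMMA: running the transducer on the reversed tagged word of `σ`
computes the reversed relative encoding on the complement of the deleted set. -/
lemma outList_tagged (k : ℕ) (σ : Equiv.Perm (Fin n)) (S : Finset (Fin n))
    (hbd : ∀ i, rankEnc σ i ≤ k + 1) :
    outList k ∅ ((List.ofFn fun i : Fin n => (rankEnc σ i, decide (i ∈ S))).reverse)
      = (encOn σ Sᶜ).reverse := by
  have h := outList_taggedTo k σ S hbd n le_rfl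
  rw [show taggedTo σ S n
      = (List.ofFn fun i : Fin n => (rankEnc σ i, decide (i ∈ S))).reverse by
    unfold taggedTo
    rw [List.take_of_length_le (by simp)]] at h
  rw [pend_top] at h
  rw [h]
  congr 1
  unfold encOn
  congr 1
  rw [List.filter_eq_self]
  intro t _
  simp [t.isLt]


/- ### Section 6: decoding (surjectivity of the rank encoding) -/

noncomputable def consPerm {m : ℕ} (p : Fin (m + 1)) (τ : Equiv.Perm (Fin m)) : Equiv.Perm (Fin (m + 1)) :=
  Equiv.ofBijective (fun j => Fin.cases p (fun i => p.succAbove (τ i)) j) (by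
    rw [← Finite.injective_iff_bijective]
    intro j j' hjj
    induction j using Fin.cases with
    | zero =>
      induction j' using Fin.cases with
      | zero => rfl
      | succ i' =>
        simp only [Fin.cases_zero, Fin.cases_succ] at hjj
        exact absurd hjj.symm (Fin.succAbove_ne p (τ i'))
    | succ i =>
      induction j' using Fin.cases with
      | zero =>
        simp only [Fin.cases_zero, Fin.cases_succ] at hjj
        exact absurd hjj (Fin.succAbove_ne p (τ i))
      | succ i' =>
        simp only [Fin.cases_succ] at hjj
        rw [τ.injective (p.succAbove_right_injective hjj)])

lemma consPerm_zero {m : ℕ} (p : Fin (m + 1)) (τ : Equiv.Perm (Fin m)) :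
    consPerm p τ 0 = p := rfl

lemma consPerm_succ {m : ℕ} (p : Fin (m + 1)) (τ : Equiv.Perm (Fin m)) (i : Fin m) :
    consPerm p τ i.succ = p.succAbove (τ i) := rfl

lemma rankEnc_consPerm_zero {m : ℕ} (p : Fin (m + 1)) (τ : Equiv.Perm (Fin m)) :
    rankEnc (consPerm p τ) 0 = p.val + 1 := by
  classical
  unfold rankEnc
  rw [show (Finset.univ.filter fun j : Fin (m+1) =>
      (0 : Fin (m+1)) ≤ j ∧ consPerm p τ j ≤ consPerm p τ 0)
      = (Finset.univ.filter fun j : Fin (m+1) => consPerm p τ j ≤ p) by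
    apply Finset.filter_congr
    intro j _
    simp [consPerm_zero, Fin.zero_le]]
  rw [show (Finset.univ.filter fun j : Fin (m+1) => consPerm p τ j ≤ p)
      = Finset.image (consPerm p τ).symm (Finset.univ.filter (fun v : Fin (m+1) => v ≤ p)) by
    ext j
    simp only [Finset.mem_filter, Finset.mem_univ, true_and, Finset.mem_image]
    constructor
    · intro hle
      exact ⟨consPerm p τ j, by simp [hle], by simp⟩
    · rintro ⟨v, hv, rfl⟩
      simpa using hv]
  rw [Finset.card_image_of_injective _ (consPerm p τ).symm.injective]
  rw [show (Finset.univ.filter fun v : Fin (m+1) => v ≤ p) = Finset.Iic p by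
    ext v; simp]
  rw [Fin.card_Iic]

lemma rankEnc_consPerm_succ {m : ℕ} (p : Fin (m + 1)) (τ : Equiv.Perm (Fin m)) (i : Fin m) :
    rankEnc (consPerm p τ) i.succ = rankEnc τ i := by
  classical
  unfold rankEnc
  symm
  apply Finset.card_bij (fun j _ => j.succ)
  · intro j hj
    simp only [Finset.mem_filter, Finset.mem_univ, true_and] at hj ⊢
    constructor
    · exact Fin.succ_le_succ_iff.mpr hj.1
    · rw [consPerm_succ, consPerm_succ]
      exact (Fin.succAbove_le_succAbove_iff (p := p)).mpr hj.2
  · intro j1 _ j2 _ hj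
    exact Fin.succ_injective _ hj
  · intro j hj
    simp only [Finset.mem_filter, Finset.mem_univ, true_and] at hj
    have hj0 : j ≠ 0 := by
      intro hh
      rw [hh] at hj
      exact absurd hj.1 (by
        intro hle
        have := Fin.le_def.mp hle
        simp at this)
    obtain ⟨j', rfl⟩ := Fin.exists_succ_eq.mpr hj0
    refine ⟨j', ?_, rfl⟩
    simp only [Finset.mem_filter, Finset.mem_univ, true_and]
    constructor
    · exact Fin.succ_le_succ_iff.mp hj.1
    · rw [consPerm_succ, consPerm_succ] at hj
      exact (Fin.succAbove_le_succAbove_iff (p := p)).mp hj.2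

lemma decode : ∀ (w : List ℕ), (∀ i (h : i < w.length), 1 ≤ w[i] ∧ w[i] ≤ w.length - i) →
    ∃ σ : Equiv.Perm (Fin w.length), w = List.ofFn (rankEnc σ) := by
  intro w
  induction w with
  | nil =>
    intro _
    exact ⟨1, by simp⟩
  | cons a w ih =>
    intro hval
    obtain ⟨τ, hτ⟩ := ih (fun i h => by
      have := hval (i+1) (by simpa using h)
      simpa using this)
    have ha := hval 0 (by simp)
    simp only [List.getElem_cons_zero, List.length_cons] at ha
    have ha1 : a - 1 < w.length + 1 := by omega
    refine ⟨consPerm ⟨a - 1, ha1⟩ τ, ?_⟩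
    rw [List.ofFn_succ]
    congr 1
    · rw [rankEnc_consPerm_zero]
      simp only [Fin.val_mk]
      omega
    · simp only [rankEnc_consPerm_succ]
      exact hτ


/- ### Section 7: automata toolbox -/

section Automata

variable {α : Type} {Q1 Q2 Q : Type}

def dfaInter (M1 : DFA α Q1) (M2 : DFA α Q2) : DFA α (Q1 × Q2) where
  step p a := (M1.step p.1 a, M2.step p.2 a)
  start := (M1.start, M2.start)
  accept := {p | p.1 ∈ M1.accept ∧ p.2 ∈ M2.accept}

lemma dfaInter_evalFrom (M1 : DFA α Q1) (M2 : DFA α Q2) (s1 : Q1) (s2 : Q2) (x : List α) :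
    (dfaInter M1 M2).evalFrom (s1, s2) x = (M1.evalFrom s1 x, M2.evalFrom s2 x) := by
  induction x generalizing s1 s2 with
  | nil => rfl
  | cons a x ih => exact ih _ _

lemma dfaInter_accepts (M1 : DFA α Q1) (M2 : DFA α Q2) :
    (dfaInter M1 M2).accepts = {x | x ∈ M1.accepts ∧ x ∈ M2.accepts} := by
  ext x
  rw [DFA.mem_accepts, DFA.eval, dfaInter_evalFrom]
  rfl

def dfaCompl (M : DFA α Q) : DFA α Q where
  step := M.step
  start := M.start
  accept := M.acceptᶜ

lemma dfaCompl_accepts (M : DFA α Q) : (dfaCompl M).accepts = {x | x ∉ M.accepts} := by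
  ext x
  rw [DFA.mem_accepts, DFA.eval]
  rw [show (dfaCompl M).evalFrom (dfaCompl M).start x = M.evalFrom M.start x from rfl]
  rfl

lemma isRegular_inter {L1 L2 : Language α} (h1 : L1.IsRegular) (h2 : L2.IsRegular) :
    Language.IsRegular {x | x ∈ L1 ∧ x ∈ L2} := by
  obtain ⟨σ1, f1, M1, rfl⟩ := h1
  obtain ⟨σ2, f2, M2, rfl⟩ := h2
  exact ⟨σ1 × σ2, by infer_instance, dfaInter M1 M2, dfaInter_accepts M1 M2⟩

lemma isRegular_compl {L : Language α} (h : L.IsRegular) :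
    Language.IsRegular {x | x ∉ L} := by
  obtain ⟨σ1, f1, M1, rfl⟩ := h
  exact ⟨σ1, f1, dfaCompl M1, dfaCompl_accepts M1⟩

/- reversal -/

def revNFA (M : DFA α Q) : NFA α Q where
  step q a := {p | M.step p a = q}
  start := M.accept
  accept := {M.start}

lemma revNFA_evalFrom (M : DFA α Q) :
    ∀ (u : List α) (S : Set Q) (p : Q),
      p ∈ (revNFA M).evalFrom S u ↔ ∃ q ∈ S, M.evalFrom p u.reverse = q := by
  intro u
  induction u with
  | nil =>
    intro S p
    simp [NFA.evalFrom]
  | cons a u ih =>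
    intro S p
    rw [show (revNFA M).evalFrom S (a :: u) = (revNFA M).evalFrom ((revNFA M).stepSet S a) u
      from rfl]
    rw [ih]
    rw [show (a :: u).reverse = u.reverse ++ [a] by simp]
    rw [DFA.evalFrom_append_singleton]
    constructor
    · rintro ⟨q, hq, heq⟩
      rw [NFA.mem_stepSet] at hq
      obtain ⟨t, ht, hstep⟩ := hq
      refine ⟨t, ht, ?_⟩
      rw [heq]
      exact hstep
    · rintro ⟨t, ht, hstep⟩
      refine ⟨M.evalFrom p u.reverse, ?_, rfl⟩
      rw [NFA.mem_stepSet]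
      exact ⟨t, ht, hstep⟩

lemma revNFA_accepts (M : DFA α Q) :
    (revNFA M).accepts = {x | x.reverse ∈ M.accepts} := by
  ext x
  rw [NFA.mem_accepts]
  constructor
  · rintro ⟨S, hS, hmem⟩
    rw [show S = M.start from hS] at hmem
    rw [revNFA_evalFrom] at hmem
    obtain ⟨q, hq, hrun⟩ := hmem
    show x.reverse ∈ M.accepts
    rw [DFA.mem_accepts]
    rw [show M.eval x.reverse = M.evalFrom M.start x.reverse from rfl, hrun]
    exact hq
  · intro hx
    refine ⟨M.start, rfl, ?_⟩
    rw [revNFA_evalFrom]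
    exact ⟨M.evalFrom M.start x.reverse, hx, rfl⟩

lemma isRegular_reverse {L : Language α} (h : L.IsRegular) :
    Language.IsRegular {x : List α | x.reverse ∈ L} := by
  classical
  obtain ⟨σ1, f1, M1, rfl⟩ := h
  haveI : Fintype (Set σ1) := Fintype.ofFinite _
  exact ⟨Set σ1, by infer_instance, (revNFA M1).toDFA,
    by rw [NFA.toDFA_correct, revNFA_accepts]⟩

end Automata

/- ### Section 8: the DFA for reversed valid words -/

def rvDFA (r : ℕ) : DFA ℕ (Option (Fin (r + 1))) where
  step q a := match q with
    | none => none
    | some c => if 1 ≤ a ∧ a ≤ min (c.val + 1) r then some ⟨min (c.val + 1) r, by omega⟩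
        else none
  start := some ⟨0, by omega⟩
  accept := {q | q ≠ none}

lemma rvDFA_none (r : ℕ) : ∀ (u : List ℕ), (rvDFA r).evalFrom none u = none := by
  intro u
  induction u with
  | nil => rfl
  | cons a u ih => exact ih

lemma rvDFA_eval (r : ℕ) :
    ∀ (u : List ℕ) (m : ℕ) (hm : min m r < r + 1),
      ((rvDFA r).evalFrom (some ⟨min m r, hm⟩) u ∈ (rvDFA r).accept)
        ↔ ∀ i (h : i < u.length), 1 ≤ u[i] ∧ u[i] ≤ min (m + i + 1) r := by
  intro u
  induction u with
  | nil =>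
    intro m hm
    simp only [DFA.evalFrom_nil]
    constructor
    · intro _ i h
      exact absurd h (by simp)
    · intro _
      simp [rvDFA]
  | cons a u ih =>
    intro m hm
    rw [show (rvDFA r).evalFrom (some ⟨min m r, hm⟩) (a :: u)
        = (rvDFA r).evalFrom ((rvDFA r).step (some ⟨min m r, hm⟩) a) u from rfl]
    by_cases hc : 1 ≤ a ∧ a ≤ min (min m r + 1) r
    · rw [show (rvDFA r).step (some ⟨min m r, hm⟩) a
          = some ⟨min (min m r + 1) r, by omega⟩ by
        show (if 1 ≤ a ∧ a ≤ min ((⟨min m r, hm⟩ : Fin (r+1)).val + 1) r then _ else _) = _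
        rw [if_pos hc]]
      rw [show (⟨min (min m r + 1) r, by omega⟩ : Fin (r+1))
          = ⟨min (m + 1) r, by omega⟩ by
        apply Fin.ext
        simp only [Fin.val_mk]
        omega]
      rw [ih (m + 1) (by omega)]
      constructor
      · intro hall i h
        match i with
        | 0 =>
          simp only [List.getElem_cons_zero]
          omega
        | Nat.succ i' =>
          have := hall i' (by simpa using h)
          simp only [List.getElem_cons_succ]
          rw [show m + (i' + 1) + 1 = m + 1 + i' + 1 by omega]
          exact this
      · intro hall i h
        have := hall (i + 1) (by simpa using h)
        simp only [List.getElem_cons_succ] at this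
        rw [show m + 1 + i + 1 = m + (i + 1) + 1 by omega]
        exact this
    · rw [show (rvDFA r).step (some ⟨min m r, hm⟩) a = none by
        show (if 1 ≤ a ∧ a ≤ min ((⟨min m r, hm⟩ : Fin (r+1)).val + 1) r then _ else _) = _
        rw [if_neg hc]]
      rw [rvDFA_none]
      constructor
      · intro hmem
        exact absurd rfl hmem
      · intro hall
        have := hall 0 (by simp)
        simp only [List.getElem_cons_zero] at this
        exact absurd this (by omega)

lemma rvDFA_accepts (r : ℕ) (u : List ℕ) :
    u ∈ (rvDFA r).accepts ↔ ∀ i (h : i < u.length), 1 ≤ u[i] ∧ u[i] ≤ min (i + 1) r := by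
  rw [DFA.mem_accepts]
  rw [show (rvDFA r).eval u = (rvDFA r).evalFrom (some ⟨0, by omega⟩) u from rfl]
  rw [show (⟨0, by omega⟩ : Fin (r+1)) = ⟨min 0 r, by omega⟩ by
    apply Fin.ext; simp]
  rw [rvDFA_eval r u 0 (by omega)]
  constructor
  · intro hall i h
    have := hall i h
    rw [show 0 + i + 1 = i + 1 by omega] at this
    exact this
  · intro hall i h
    rw [show 0 + i + 1 = i + 1 by omega]
    exact hall i h


/- ### Section 9: the deletion-relation NFA -/

def TS (k : ℕ) : Type := {T : Finset ℕ // T ⊆ Finset.range (k + 2)}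

noncomputable instance TS.fintype (k : ℕ) : Fintype (TS k) := by
  apply Fintype.ofInjective (fun T : TS k =>
    (Finset.univ.filter (fun i : Fin (k + 2) => i.val ∈ T.1)))
  intro T1 T2 h
  have h2 : (Finset.univ.filter (fun i : Fin (k + 2) => i.val ∈ T1.1))
      = (Finset.univ.filter (fun i : Fin (k + 2) => i.val ∈ T2.1)) := h
  apply Subtype.ext
  ext x
  constructor
  · intro hx
    have hxlt : x < k + 2 := Finset.mem_range.mp (T1.2 hx)
    have h3 : (⟨x, hxlt⟩ : Fin (k+2)) ∈ Finset.univ.filter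
        (fun i : Fin (k + 2) => i.val ∈ T1.1) := by simp [hx]
    rw [h2] at h3
    simpa using h3
  · intro hx
    have hxlt : x < k + 2 := Finset.mem_range.mp (T2.2 hx)
    have h3 : (⟨x, hxlt⟩ : Fin (k+2)) ∈ Finset.univ.filter
        (fun i : Fin (k + 2) => i.val ∈ T2.1) := by simp [hx]
    rw [← h2] at h3
    simpa using h3

lemma stepT_subset (k : ℕ) (T : Finset ℕ) (g : ℕ × Bool) :
    stepT k T g ⊆ Finset.range (k + 2) := by
  intro x hx
  unfold stepT at hx
  rw [Finset.mem_filter] at hx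
  rw [Finset.mem_range]
  omega

def stepTS (k : ℕ) (T : TS k) (g : ℕ × Bool) : TS k :=
  ⟨stepT k T.1 g, stepT_subset k T.1 g⟩

def emptyTS (k : ℕ) : TS k := ⟨∅, by simp⟩

/-- NFA over input `u` (a reversed word) that guesses a tagging `μ` of `u` and
simulates the DFA `D` on the transducer output `outList k ∅ μ`. -/
def relNFA (k : ℕ) {Q : Type} (D : DFA ℕ Q) (strict : Bool) : NFA ℕ (Q × TS k × Bool) where
  step s a :=
    { (D.step s.1 (a - ((s.2.1.1.filter (fun r => r < a)).card)), stepTS k s.2.1 (a, false),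
        s.2.2),
      (s.1, stepTS k s.2.1 (a, true), true) }
  start := {(D.start, emptyTS k, false)}
  accept := {s | s.1 ∈ D.accept ∧ (strict = true → s.2.2 = true)}

lemma nfa_evalFrom_exists {α σ : Type} (M : NFA α σ) :
    ∀ (u : List α) (S : Set σ) (s : σ),
      s ∈ M.evalFrom S u ↔ ∃ s0 ∈ S, s ∈ M.evalFrom {s0} u := by
  intro u
  induction u with
  | nil =>
    intro S s
    simp [NFA.evalFrom]
  | cons a u ih =>
    intro S s
    rw [show M.evalFrom S (a :: u) = M.evalFrom (M.stepSet S a) u from rfl]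
    rw [ih]
    constructor
    · rintro ⟨s1, hs1, hmem⟩
      rw [NFA.mem_stepSet] at hs1
      obtain ⟨s0, hs0, hstep⟩ := hs1
      refine ⟨s0, hs0, ?_⟩
      rw [show M.evalFrom {s0} (a :: u) = M.evalFrom (M.stepSet {s0} a) u from rfl]
      rw [ih]
      exact ⟨s1, by rw [NFA.mem_stepSet]; exact ⟨s0, rfl, hstep⟩, hmem⟩
    · rintro ⟨s0, hs0, hmem⟩
      rw [show M.evalFrom {s0} (a :: u) = M.evalFrom (M.stepSet {s0} a) u from rfl] at hmem
      rw [ih] at hmem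
      obtain ⟨s1, hs1, hmem⟩ := hmem
      rw [NFA.mem_stepSet] at hs1
      obtain ⟨s0', hs0', hstep⟩ := hs1
      rw [show s0' = s0 from hs0'] at hstep
      exact ⟨s1, by rw [NFA.mem_stepSet]; exact ⟨s0, hs0, hstep⟩, hmem⟩

/-- transducer state after processing the whole move list -/
def foldTS (k : ℕ) (T : TS k) (μ : List (ℕ × Bool)) : TS k :=
  μ.foldl (stepTS k) T

lemma relNFA_evalFrom (k : ℕ) {Q : Type} (D : DFA ℕ Q) (strict : Bool) :
    ∀ (u : List ℕ) (q : Q) (T : TS k) (f : Bool) (s' : Q × TS k × Bool),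
      s' ∈ (relNFA k D strict).evalFrom {(q, T, f)} u
        ↔ ∃ μ : List (ℕ × Bool), μ.map Prod.fst = u ∧
            s' = (D.evalFrom q (outList k T.1 μ), foldTS k T μ, f || μ.any (fun g => g.2)) := by
  intro u
  induction u with
  | nil =>
    intro q T f s'
    rw [show (relNFA k D strict).evalFrom {(q, T, f)} [] = {(q, T, f)} from rfl]
    constructor
    · intro hs
      refine ⟨[], rfl, ?_⟩
      rw [show s' = (q, T, f) from hs]
      simp [outList, foldTS]
    · rintro ⟨μ, hmap, rfl⟩
      rw [show μ = [] from List.map_eq_nil_iff.mp hmap]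
      show _ ∈ ({(q, T, f)} : Set _)
      simp [outList, foldTS]
  | cons a u ih =>
    intro q T f s'
    rw [show (relNFA k D strict).evalFrom {(q, T, f)} (a :: u)
        = (relNFA k D strict).evalFrom ((relNFA k D strict).stepSet {(q, T, f)} a) u from rfl]
    have hss : (relNFA k D strict).stepSet {(q, T, f)} a
        = {(D.step q (a - ((T.1.filter (fun r => r < a)).card)), stepTS k T (a, false), f),
           (q, stepTS k T (a, true), true)} := by
      ext s
      rw [NFA.mem_stepSet]
      constructor
      · rintro ⟨t, ht, hstep⟩
        rw [show t = (q, T, f) from ht] at hstep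
        exact hstep
      · intro hs
        exact ⟨(q, T, f), rfl, hs⟩
    rw [hss]
    rw [nfa_evalFrom_exists]
    constructor
    · rintro ⟨s0, hs0, hmem⟩
      rcases hs0 with hs0 | hs0
      · -- keep move
        rw [show s0 = (D.step q (a - ((T.1.filter (fun r => r < a)).card)),
            stepTS k T (a, false), f) from hs0] at hmem
        rw [ih] at hmem
        obtain ⟨μ, hmap, rfl⟩ := hmem
        refine ⟨(a, false) :: μ, by simp [hmap], ?_⟩
        rw [show outList k T.1 ((a, false) :: μ)
            = (a - ((T.1.filter (fun r => r < a)).card)) :: outList k (stepT k T.1 (a, false)) μ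
            from rfl]
        rw [show D.evalFrom q ((a - ((T.1.filter (fun r => r < a)).card))
            :: outList k (stepT k T.1 (a, false)) μ)
            = D.evalFrom (D.step q (a - ((T.1.filter (fun r => r < a)).card)))
              (outList k (stepT k T.1 (a, false)) μ) from rfl]
        rfl
      · -- delete move
        rw [show s0 = (q, stepTS k T (a, true), true) from hs0] at hmem
        rw [ih] at hmem
        obtain ⟨μ, hmap, rfl⟩ := hmem
        refine ⟨(a, true) :: μ, by simp [hmap], ?_⟩
        rw [show outList k T.1 ((a, true) :: μ) = outList k (stepT k T.1 (a, true)) μ from rfl]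
        simp [foldTS, stepTS]
    · rintro ⟨μ, hmap, rfl⟩
      rcases μ with _ | ⟨⟨a', d⟩, μ'⟩
      · simp at hmap
      · have ha : a' = a := by simpa using congrArg List.head? hmap
        subst ha
        have hmap' : μ'.map Prod.fst = u := by simpa using hmap
        cases d with
        | false =>
          refine ⟨(D.step q (a' - ((T.1.filter (fun r => r < a')).card)),
            stepTS k T (a', false), f), Or.inl rfl, ?_⟩
          rw [ih]
          exact ⟨μ', hmap', rfl⟩
        | true =>
          refine ⟨(q, stepTS k T (a', true), true), Or.inr rfl, ?_⟩
          rw [ih]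
          refine ⟨μ', hmap', ?_⟩
          rw [show outList k T.1 ((a', true) :: μ') = outList k (stepT k T.1 (a', true)) μ'
            from rfl]
          simp [foldTS, stepTS]

lemma relNFA_accepts (k : ℕ) {Q : Type} (D : DFA ℕ Q) (strict : Bool) (u : List ℕ) :
    u ∈ (relNFA k D strict).accepts
      ↔ ∃ μ : List (ℕ × Bool), μ.map Prod.fst = u ∧ outList k ∅ μ ∈ D.accepts ∧
          (strict = true → μ.any (fun g => g.2) = true) := by
  rw [NFA.mem_accepts]
  constructor
  · rintro ⟨s, hs, hmem⟩
    rw [show (relNFA k D strict).start = {(D.start, emptyTS k, false)} from rfl] at hmem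
    rw [relNFA_evalFrom] at hmem
    obtain ⟨μ, hmap, rfl⟩ := hmem
    obtain ⟨h1, h2⟩ := hs
    refine ⟨μ, hmap, h1, fun hstrict => by simpa using h2 hstrict⟩
  · rintro ⟨μ, hmap, hacc, hflag⟩
    refine ⟨(D.evalFrom D.start (outList k (emptyTS k).1 μ), foldTS k (emptyTS k) μ,
      false || μ.any (fun g => g.2)), ⟨hacc, fun hstrict => by simpa using hflag hstrict⟩, ?_⟩
    rw [show (relNFA k D strict).start = {(D.start, emptyTS k, false)} from rfl]
    rw [relNFA_evalFrom]
    exact ⟨μ, hmap, rfl⟩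


/- ### Section 10: assembly -/

lemma enc_transfer {m m' : ℕ} (π : Equiv.Perm (Fin m)) (π' : Equiv.Perm (Fin m'))
    (h : List.ofFn (rankEnc π) = List.ofFn (rankEnc π'))
    (P : ∀ l, Equiv.Perm (Fin l) → Prop) : P m π ↔ P m' π' := by
  have hm : m = m' := by simpa using congrArg List.length h
  subst hm
  rw [rankEnc_injective h]

def LXset (X : ∀ n : ℕ, Set (Equiv.Perm (Fin n))) : Set (List ℕ) :=
  {w : List ℕ | ∃ (n : ℕ), ∃ π ∈ X n, w = List.ofFn (rankEnc π)}

def LBset (X : ∀ n : ℕ, Set (Equiv.Perm (Fin n))) : Set (List ℕ) :=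
  {w : List ℕ | ∃ (n : ℕ) (β : Equiv.Perm (Fin n)), InBasis X β ∧ w = List.ofFn (rankEnc β)}

def VA (r : ℕ) : Set (List ℕ) :=
  {w : List ℕ | ∃ (n : ℕ) (σ : Equiv.Perm (Fin n)),
    w = List.ofFn (rankEnc σ) ∧ ∀ i, rankEnc σ i ≤ r}

lemma mem_VA_iff (r : ℕ) (w : List ℕ) :
    w ∈ VA r ↔ ∀ i (h : i < w.reverse.length),
      1 ≤ w.reverse[i] ∧ w.reverse[i] ≤ min (i + 1) r := by
  constructor
  · rintro ⟨n, σ, rfl, hbd⟩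
    intro i h
    have hn : (List.ofFn (rankEnc σ)).length = n := by simp
    have hi : i < n := by simpa [hn] using h
    rw [List.getElem_reverse]
    have hlen : (List.ofFn (rankEnc σ)).length - 1 - i < n := by omega
    rw [List.getElem_ofFn]
    refine ⟨one_le_rankEnc σ _, Nat.le_min.mpr ⟨?_, ?_⟩⟩
    · have h1 := rankEnc_le_sub σ ⟨(List.ofFn (rankEnc σ)).length - 1 - i, hlen⟩
      simp only [Fin.val_mk] at h1
      have h3 : n - ((List.ofFn (rankEnc σ)).length - 1 - i) ≤ i + 1 := by
        rw [hn]; omega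
      exact le_trans h1 h3
    · exact hbd _
  · intro hrv
    have hval : ∀ i (h : i < w.length), 1 ≤ w[i] ∧ w[i] ≤ w.length - i := by
      intro i h
      have h' : w.length - 1 - i < w.reverse.length := by simp; omega
      have hle := hrv (w.length - 1 - i) h'
      rw [List.getElem_reverse] at hle
      have hidx : w.length - 1 - (w.length - 1 - i) = i := by
        simp at h'; omega
      simp only [hidx] at hle
      omega
    obtain ⟨σ, hσ⟩ := decode w hval
    refine ⟨w.length, σ, hσ, ?_⟩
    intro i
    have h' : w.length - 1 - i.val < w.reverse.length := by simp; omega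
    have hle := hrv (w.length - 1 - i.val) h'
    rw [List.getElem_reverse] at hle
    have hidx : w.length - 1 - (w.length - 1 - i.val) = i.val := by
      have := i.isLt; simp at h' ⊢; omega
    simp only [hidx] at hle
    have hw : w[i.val]'(i.isLt) = rankEnc σ i := by
      have h3 := List.getElem_of_eq hσ (i.isLt)
      rw [h3, List.getElem_ofFn]
    rw [hw] at hle
    omega

lemma VA_regular (r : ℕ) : Language.IsRegular (VA r : Language ℕ) := by
  have hbase : Language.IsRegular ((rvDFA r).accepts) :=
    ⟨Option (Fin (r + 1)), by infer_instance, rvDFA r, rfl⟩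
  have h := isRegular_reverse hbase
  have hset : {x : List ℕ | x.reverse ∈ (rvDFA r).accepts} = VA r := by
    ext w
    rw [Set.mem_setOf_eq, rvDFA_accepts, mem_VA_iff]
  rw [← hset]
  exact h

/-- THE BRIDGE: existence of an accepted tagging of the reversed encoding of `σ`
is equivalent to existence of a deletion set with accepted relative encoding. -/
lemma bridge (k n : ℕ) (σ : Equiv.Perm (Fin n)) (hbd : ∀ i, rankEnc σ i ≤ k + 1)
    (P : List ℕ → Prop) (strict : Bool) :
    (∃ μ : List (ℕ × Bool), μ.map Prod.fst = (List.ofFn (rankEnc σ)).reverse ∧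
        P (outList k ∅ μ) ∧ (strict = true → μ.any (fun g => g.2) = true))
      ↔ ∃ S : Finset (Fin n), P ((encOn σ Sᶜ).reverse) ∧ (strict = true → S.Nonempty) := by
  classical
  constructor
  · rintro ⟨μ, hmap, hP, hflag⟩
    have hν1 : μ.reverse.map Prod.fst = List.ofFn (rankEnc σ) := by
      rw [List.map_reverse, hmap, List.reverse_reverse]
    have hlen : μ.reverse.length = n := by
      have := congrArg List.length hν1
      simpa using this
    set d : Fin n → Bool := fun i => (μ.reverse.get (Fin.cast hlen.symm i)).2 with hd
    have hνeq : μ.reverse = List.ofFn (fun i => (rankEnc σ i, d i)) := by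
      apply List.ext_getElem (by simp [hlen])
      intro i h1 h2
      have hin : i < n := by simpa [hlen] using h1
      rw [List.getElem_ofFn]
      have hfst : (μ.reverse[i]'h1).1 = rankEnc σ ⟨i, by simpa using h2⟩ := by
        have h3 := List.getElem_of_eq hν1 (show i < (μ.reverse.map Prod.fst).length by
          simpa using h1)
        rw [List.getElem_map] at h3
        rw [List.getElem_ofFn] at h3
        exact h3
      have hsnd : (μ.reverse[i]'h1).2 = d ⟨i, by simpa using h2⟩ := rfl
      rw [Prod.ext_iff]
      exact ⟨hfst, hsnd⟩
    set S : Finset (Fin n) := Finset.univ.filter (fun i => d i = true) with hS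
    have hdec : ∀ i : Fin n, decide (i ∈ S) = d i := by
      intro i
      by_cases hdi : d i = true
      · simp [hS, hdi]
      · simp only [Bool.not_eq_true] at hdi
        simp [hS, hdi]
    have hμeq : μ = (List.ofFn (fun i => (rankEnc σ i, decide (i ∈ S)))).reverse := by
      rw [show (fun i : Fin n => (rankEnc σ i, decide (i ∈ S)))
          = (fun i : Fin n => (rankEnc σ i, d i)) by funext i; rw [hdec]]
      rw [← hνeq, List.reverse_reverse]
    refine ⟨S, ?_, ?_⟩
    · rw [hμeq] at hP
      rwa [outList_tagged k σ S hbd] at hP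
    · intro hstrict
      have := hflag hstrict
      rw [List.any_eq_true] at this
      obtain ⟨g, hg, hg2⟩ := this
      rw [hμeq, List.mem_reverse, List.mem_ofFn] at hg
      obtain ⟨i, rfl⟩ := hg
      simp only at hg2
      refine ⟨i, ?_⟩
      rw [hS, Finset.mem_filter]
      refine ⟨Finset.mem_univ i, ?_⟩
      rw [← hdec i]
      exact hg2
  · rintro ⟨S, hP, hflag⟩
    refine ⟨(List.ofFn (fun i => (rankEnc σ i, decide (i ∈ S)))).reverse, ?_, ?_, ?_⟩
    · rw [List.map_reverse, List.reverse_inj, List.map_ofFn]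
      rfl
    · rwa [outList_tagged k σ S hbd]
    · intro hstrict
      obtain ⟨i, hi⟩ := hflag hstrict
      rw [List.any_eq_true]
      refine ⟨(rankEnc σ i, decide (i ∈ S)), ?_, by simpa using hi⟩
      rw [List.mem_reverse, List.mem_ofFn]
      exact ⟨i, rfl⟩


lemma X_iff_no_basis_pattern {X : ∀ n : ℕ, Set (Equiv.Perm (Fin n))}
    (hclosed : ClosedFamily X) {n : ℕ} (σ : Equiv.Perm (Fin n)) :
    σ ∈ X n ↔ ¬ ∃ S : Finset (Fin n), encOn σ Sᶜ ∈ LBset X := by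
  classical
  constructor
  · rintro hσ ⟨S, hS⟩
    obtain ⟨m, β, hβ, henc⟩ := hS
    have henc2 : List.ofFn (rankEnc (patternOf σ Sᶜ)) = List.ofFn (rankEnc β) := by
      rw [ofFn_patternOf]
      exact henc
    have hb : InBasis X (patternOf σ Sᶜ) :=
      (enc_transfer _ _ henc2 (fun l π => InBasis X π)).mpr hβ
    exact hb.1 (hclosed _ _ _ _ hσ (involves_patternOf σ Sᶜ))
  · intro hno
    by_contra hσ
    obtain ⟨m, β, hβ, hinv⟩ := exists_basis_involved X n σ hσ
    obtain ⟨e, he⟩ := hinv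
    apply hno
    refine ⟨(Finset.univ.map e.toEmbedding)ᶜ, ?_⟩
    rw [compl_compl]
    exact ⟨m, β, hβ, (ofFn_rankEnc_of_involves σ β e he).symm⟩

/-- Direction 1: if the class language is regular then the basis language is regular. -/
lemma basis_regular_of_class_regular (k : ℕ) (X : ∀ n : ℕ, Set (Equiv.Perm (Fin n)))
    (hclosed : ClosedFamily X)
    (hsub : ∀ n : ℕ, ∀ π ∈ X n, ∀ i, rankEnc π i ≤ k)
    (hLX : Language.IsRegular (LXset X : Language ℕ)) :
    Language.IsRegular (LBset X : Language ℕ) := by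
  classical
  have hA : Language.IsRegular
      {w : List ℕ | w ∈ VA (k+1) ∧ w ∈ {w : List ℕ | w ∉ (LXset X : Language ℕ)}} :=
    isRegular_inter (VA_regular (k+1)) (isRegular_compl hLX)
  set A : Set (List ℕ) :=
    {w : List ℕ | w ∈ VA (k+1) ∧ w ∈ {w : List ℕ | w ∉ (LXset X : Language ℕ)}} with hAdef
  obtain ⟨Q, hQ, D, hD⟩ := isRegular_reverse (L := (A : Language ℕ)) hA
  haveI : Fintype Q := hQ
  haveI : Fintype (Set (Q × TS k × Bool)) := Fintype.ofFinite _
  have hNreg : Language.IsRegular (relNFA k D true).accepts :=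
    ⟨Set (Q × TS k × Bool), by infer_instance, (relNFA k D true).toDFA, NFA.toDFA_correct⟩
  have hREG := isRegular_reverse hNreg
  set REG : Set (List ℕ) := {w : List ℕ | w.reverse ∈ (relNFA k D true).accepts} with hREGdef
  have hmain : (LBset X : Set (List ℕ)) = {w : List ℕ | w ∈ A ∧ w ∈ {w : List ℕ | w ∉ REG}} := by
    ext w
    constructor
    · rintro ⟨m, β, hβ, rfl⟩
      have hbd : ∀ i, rankEnc β i ≤ k + 1 := fun i => basis_letter_bound hsub hβ i
      refine ⟨⟨⟨m, β, rfl, hbd⟩, ?_⟩, ?_⟩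
      · rintro ⟨n', π, hπX, henc⟩
        have : π ∈ X n' ↔ β ∈ X m :=
          enc_transfer π β henc.symm (fun l τ => τ ∈ X l)
        exact hβ.1 (this.mp hπX)
      · intro hcon
        rw [hREGdef, Set.mem_setOf_eq, relNFA_accepts] at hcon
        rw [show (∃ μ : List (ℕ × Bool),
            μ.map Prod.fst = (List.ofFn (rankEnc β)).reverse ∧
            outList k ∅ μ ∈ D.accepts ∧
            (true = true → μ.any (fun g => g.2) = true)) ↔ _ from
          bridge k m β hbd (fun v => v ∈ D.accepts) true] at hcon
        obtain ⟨S, hSin, hSne⟩ := hcon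
        rw [hD] at hSin
        have hSin2 : encOn β Sᶜ ∈ A := by
          have : (encOn β Sᶜ).reverse.reverse ∈ A := hSin
          rwa [List.reverse_reverse] at this
        have hScard : Sᶜ.card < m := by
          have h1 : S.card ≤ m := by
            have := Finset.card_le_univ S
            simpa using this
          have h2 : 1 ≤ S.card := Finset.card_pos.mpr (hSne rfl)
          rw [Finset.card_compl]
          simp only [Fintype.card_fin]
          omega
        have hpatX : patternOf β Sᶜ ∈ X Sᶜ.card :=
          hβ.2 Sᶜ.card hScard (patternOf β Sᶜ) (involves_patternOf β Sᶜ)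
        exact hSin2.2 ⟨Sᶜ.card, patternOf β Sᶜ, hpatX, (ofFn_patternOf β Sᶜ).symm⟩
    · rintro ⟨⟨⟨n, σ, rfl, hbd⟩, hnLX⟩, hnREG⟩
      have hσX : σ ∉ X n := fun h => hnLX ⟨n, σ, h, rfl⟩
      refine ⟨n, σ, ⟨hσX, ?_⟩, rfl⟩
      intro l hl π hinv
      by_contra hπ
      obtain ⟨e, he⟩ := hinv
      set K : Finset (Fin n) := Finset.univ.map e.toEmbedding with hK
      have hencK : List.ofFn (rankEnc π) = encOn σ K := ofFn_rankEnc_of_involves σ π e he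
      apply hnREG
      rw [hREGdef, Set.mem_setOf_eq, relNFA_accepts]
      rw [show (∃ μ : List (ℕ × Bool),
          μ.map Prod.fst = (List.ofFn (rankEnc σ)).reverse ∧
          outList k ∅ μ ∈ D.accepts ∧
          (true = true → μ.any (fun g => g.2) = true)) ↔ _ from
        bridge k n σ hbd (fun v => v ∈ D.accepts) true]
      refine ⟨Kᶜ, ?_, ?_⟩
      · rw [compl_compl, hD]
        show (encOn σ K).reverse.reverse ∈ A
        rw [List.reverse_reverse]
        constructor
        · refine ⟨l, π, hencK.symm, ?_⟩
          intro i
          have hmem : rankEnc π i ∈ List.ofFn (rankEnc π) := List.mem_ofFn.mpr ⟨i, rfl⟩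
          rw [hencK] at hmem
          obtain ⟨t, hle⟩ := encOn_letter_le σ K hmem
          exact le_trans hle (hbd t)
        · rintro ⟨n'', π', hX', henc'⟩
          have : π' ∈ X n'' ↔ π ∈ X l :=
            enc_transfer π' π (by rw [← henc', hencK]) (fun l τ => τ ∈ X l)
          exact hπ (this.mp hX')
      · intro _
        rw [← Finset.card_pos, Finset.card_compl]
        have hKcard : K.card = l := by simp [hK]
        simp only [Fintype.card_fin]
        omega
  rw [show (LBset X : Language ℕ) = _ from hmain]
  exact isRegular_inter hA (isRegular_compl hREG)

/-- Direction 2: if the basis language is regular then the class language is regular. -/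
lemma class_regular_of_basis_regular (k : ℕ) (X : ∀ n : ℕ, Set (Equiv.Perm (Fin n)))
    (hclosed : ClosedFamily X)
    (hsub : ∀ n : ℕ, ∀ π ∈ X n, ∀ i, rankEnc π i ≤ k)
    (hLB : Language.IsRegular (LBset X : Language ℕ)) :
    Language.IsRegular (LXset X : Language ℕ) := by
  classical
  obtain ⟨Q, hQ, D, hD⟩ := isRegular_reverse (L := (LBset X : Language ℕ)) hLB
  haveI : Fintype Q := hQ
  haveI : Fintype (Set (Q × TS k × Bool)) := Fintype.ofFinite _
  have hNreg : Language.IsRegular (relNFA k D false).accepts :=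
    ⟨Set (Q × TS k × Bool), by infer_instance, (relNFA k D false).toDFA, NFA.toDFA_correct⟩
  have hREG := isRegular_reverse hNreg
  set REG : Set (List ℕ) := {w : List ℕ | w.reverse ∈ (relNFA k D false).accepts} with hREGdef
  have hiff : ∀ (n : ℕ) (σ : Equiv.Perm (Fin n)), (∀ i, rankEnc σ i ≤ k + 1) →
      (List.ofFn (rankEnc σ) ∈ REG ↔ ∃ S : Finset (Fin n), encOn σ Sᶜ ∈ LBset X) := by
    intro n σ hbd
    rw [hREGdef, Set.mem_setOf_eq, relNFA_accepts]
    rw [show (∃ μ : List (ℕ × Bool),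
        μ.map Prod.fst = (List.ofFn (rankEnc σ)).reverse ∧
        outList k ∅ μ ∈ D.accepts ∧
        (false = true → μ.any (fun g => g.2) = true)) ↔ _ from
      bridge k n σ hbd (fun v => v ∈ D.accepts) false]
    constructor
    · rintro ⟨S, hSin, -⟩
      rw [hD] at hSin
      refine ⟨S, ?_⟩
      have : (encOn σ Sᶜ).reverse.reverse ∈ LBset X := hSin
      rwa [List.reverse_reverse] at this
    · rintro ⟨S, hSin⟩
      refine ⟨S, ?_, by simp⟩
      rw [hD]
      show (encOn σ Sᶜ).reverse.reverse ∈ LBset X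
      rwa [List.reverse_reverse]
  have hmain : (LXset X : Set (List ℕ))
      = {w : List ℕ | w ∈ VA k ∧ w ∈ {w : List ℕ | w ∉ REG}} := by
    ext w
    constructor
    · rintro ⟨n, π, hπ, rfl⟩
      have hbd : ∀ i, rankEnc π i ≤ k := fun i => hsub n π hπ i
      refine ⟨⟨n, π, rfl, hbd⟩, ?_⟩
      intro hcon
      rw [hiff n π (fun i => le_trans (hbd i) (by omega))] at hcon
      exact (X_iff_no_basis_pattern hclosed π).mp hπ hcon
    · rintro ⟨⟨n, σ, rfl, hbd⟩, hnREG⟩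
      refine ⟨n, σ, ?_, rfl⟩
      rw [X_iff_no_basis_pattern hclosed σ]
      intro hcon
      apply hnREG
      rw [hiff n σ (fun i => le_trans (hbd i) (by omega))]
      exact hcon
  rw [show (LXset X : Language ℕ) = _ from hmain]
  exact isRegular_inter (VA_regular k) (isRegular_compl hREG)

end St15


/-- a closed subset `X` of `Ω_k` is regular (its set of rank
encodings is a regular language) iff its basis is regular. -/
theorem stmt15 (k : ℕ) (X : ∀ n : ℕ, Set (Equiv.Perm (Fin n)))
    (hclosed : ClosedFamily X)
    (hsub : ∀ n : ℕ, ∀ π ∈ X n, ∀ i, rankEnc π i ≤ k) :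
    Language.IsRegular
        {w : List ℕ | ∃ (n : ℕ), ∃ π ∈ X n, w = List.ofFn (rankEnc π)} ↔
      Language.IsRegular
        {w : List ℕ | ∃ (n : ℕ) (β : Equiv.Perm (Fin n)),
          InBasis X β ∧ w = List.ofFn (rankEnc β)} := by
  constructor
  · exact fun h => St15.basis_regular_of_class_regular k X hclosed hsub h
  · exact fun h => St15.class_regular_of_basis_regular k X hclosed hsub h
end
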